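/- arXiv:1509.09271 — 10 statements merged into one kernel-verified Lean document; each statement's English description precedes it below -/
import Mathlib

section
/- Let q be a prime power, let d be an odd positive integer, and let k = (d+1)/2. Then for every z ∈ F_q^{d+1}, the number of good pairs (x,y) ∈ F_q^k × F_q^k with Z(x,y) = z is either 0 or exactly k!. -/
open Finset

lemma vanish_on {F : Type*} [Field F] [DecidableEq F] (n : ℕ) (s : Finset F)
    (hcard : s.card ≤ n) (c : F → F)
    (h : ∀ j < n, ∑ t ∈ s, c t * t ^ j = 0) : ∀ t ∈ s, c t = 0 := by
  intro t₀ ht₀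
  have hn : 1 ≤ n := le_trans (Finset.card_pos.mpr ⟨t₀, ht₀⟩) hcard
  set p := Lagrange.basis s id t₀ with hp
  have hdeg : p.natDegree < n := by
    rw [hp, Lagrange.natDegree_basis (Set.injOn_id _) ht₀]
    omega
  have key : ∑ t ∈ s, c t * p.eval t = 0 := by
    have hev : ∀ t : F, p.eval t = ∑ j ∈ Finset.range n, p.coeff j * t ^ j := fun t =>
      Polynomial.eval_eq_sum_range' hdeg t
    simp_rw [hev, Finset.mul_sum]
    rw [Finset.sum_comm]
    refine Finset.sum_eq_zero fun j hj => ?_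
    have h1 : ∑ t ∈ s, c t * (p.coeff j * t ^ j) = p.coeff j * ∑ t ∈ s, c t * t ^ j := by
      rw [Finset.mul_sum]; exact Finset.sum_congr rfl fun t _ => by ring
    rw [h1, h j (Finset.mem_range.mp hj), mul_zero]
  rwa [Finset.sum_eq_single t₀ (fun t ht hne => by
      have : p.eval t = 0 := Lagrange.eval_basis_of_ne (v := id) (Ne.symm hne) ht
      rw [this, mul_zero])
    (fun hab => absurd ht₀ hab), hp,
    show (Lagrange.basis s id t₀).eval t₀ = 1 from
      Lagrange.eval_basis_self (Set.injOn_id _) ht₀, mul_one] at key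

lemma unique_perm {F : Type*} [Field F] [Fintype F] [DecidableEq F] (k : ℕ)
    (x x' y y' : Fin k → F)
    (hx : Function.Injective x) (hx' : Function.Injective x')
    (hy : ∀ i, y i ≠ 0) (hy' : ∀ i, y' i ≠ 0)
    (hmom : ∀ j < 2 * k, ∑ i, y i * x i ^ j = ∑ i, y' i * x' i ^ j) :
    ∃ σ : Equiv.Perm (Fin k), x = x' ∘ σ ∧ y = y' ∘ σ := by
  set f : F → F := fun t => ∑ i, if x i = t then y i else 0 with hf
  set g : F → F := fun t => ∑ i, if x' i = t then y' i else 0 with hg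
  have hfx : ∀ i, f (x i) = y i := by
    intro i
    rw [hf]
    simp only
    rw [Finset.sum_eq_single i (fun b _ hb => if_neg (fun hc => hb (hx hc)))
      (fun hb => absurd (Finset.mem_univ i) hb), if_pos rfl]
  have hgx : ∀ i, g (x' i) = y' i := by
    intro i
    rw [hg]
    simp only
    rw [Finset.sum_eq_single i (fun b _ hb => if_neg (fun hc => hb (hx' hc)))
      (fun hb => absurd (Finset.mem_univ i) hb), if_pos rfl]
  have hf0 : ∀ t, t ∉ Set.range x → f t = 0 := by
    intro t ht
    exact Finset.sum_eq_zero fun i _ => if_neg (fun hc => ht ⟨i, hc⟩)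
  have hg0 : ∀ t, t ∉ Set.range x' → g t = 0 := by
    intro t ht
    exact Finset.sum_eq_zero fun i _ => if_neg (fun hc => ht ⟨i, hc⟩)
  have hmomf : ∀ j, ∑ t : F, f t * t ^ j = ∑ i, y i * x i ^ j := by
    intro j
    rw [hf]
    simp only [Finset.sum_mul]
    rw [Finset.sum_comm]
    refine Finset.sum_congr rfl fun i _ => ?_
    simp_rw [ite_mul, zero_mul]
    rw [Finset.sum_ite_eq Finset.univ (x i) (fun t => y i * t ^ j), if_pos (Finset.mem_univ _)]
  have hmomg : ∀ j, ∑ t : F, g t * t ^ j = ∑ i, y' i * x' i ^ j := by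
    intro j
    rw [hg]
    simp only [Finset.sum_mul]
    rw [Finset.sum_comm]
    refine Finset.sum_congr rfl fun i _ => ?_
    simp_rw [ite_mul, zero_mul]
    rw [Finset.sum_ite_eq Finset.univ (x' i) (fun t => y' i * t ^ j), if_pos (Finset.mem_univ _)]
  set s : Finset F := Finset.image x Finset.univ ∪ Finset.image x' Finset.univ with hs
  have hmem : ∀ t, t ∉ s → f t - g t = 0 := by
    intro t ht
    rw [hs, Finset.mem_union, not_or] at ht
    rw [hf0 t (fun ⟨i, hi⟩ => ht.1 (Finset.mem_image.mpr ⟨i, Finset.mem_univ i, hi⟩)),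
      hg0 t (fun ⟨i, hi⟩ => ht.2 (Finset.mem_image.mpr ⟨i, Finset.mem_univ i, hi⟩)), sub_zero]
  have hcard : s.card ≤ 2 * k := by
    calc s.card ≤ (Finset.image x Finset.univ).card + (Finset.image x' Finset.univ).card :=
          Finset.card_union_le _ _
      _ ≤ k + k := by
          gcongr <;> simpa using Finset.card_image_le.trans (by simp)
      _ = 2 * k := by ring
  have hzero : ∀ t ∈ s, f t - g t = 0 := by
    refine vanish_on (2 * k) s hcard (fun t => f t - g t) (fun j hj => ?_)
    have h0 : ∑ t : F, (f t - g t) * t ^ j = 0 := by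
      simp_rw [sub_mul]
      rw [Finset.sum_sub_distrib, hmomf, hmomg, hmom j hj, sub_self]
    show ∑ t ∈ s, (f t - g t) * t ^ j = 0
    rw [Finset.sum_subset (Finset.subset_univ s)
      (fun t _ ht => by rw [hmem t ht, zero_mul])]
    exact h0
  have hfg : ∀ t, f t = g t := by
    intro t
    by_cases ht : t ∈ s
    · exact sub_eq_zero.mp (hzero t ht)
    · exact sub_eq_zero.mp (hmem t ht)
  -- build the permutation
  have hex : ∀ i, ∃ j, x' j = x i := by
    intro i
    by_contra hc
    push_neg at hc
    have : g (x i) = 0 := hg0 _ (fun ⟨j, hj⟩ => hc j hj)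
    rw [← hfg, hfx] at this
    exact hy i this
  choose τ hτ using hex
  have hτinj : Function.Injective τ := fun a b hab => hx (by rw [← hτ a, ← hτ b, hab])
  let σ : Equiv.Perm (Fin k) := Equiv.ofBijective τ
    ((Fintype.bijective_iff_injective_and_card τ).mpr ⟨hτinj, rfl⟩)
  refine ⟨σ, funext fun i => (hτ i).symm, funext fun i => ?_⟩
  have : y i = g (x i) := by rw [← hfg, hfx]
  rw [this, ← hτ i, hgx]
  rfl

/-- Let `q` be a prime power (here `F` is the finite field with `q` elements),
let `d` be an odd positive integer, and let `k = (d+1)/2`.  Then for every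
`z ∈ F_q^{d+1}`, the number of good pairs `(x,y) ∈ F_q^k × F_q^k` with `Z(x,y) = z`
is either `0` or exactly `k!`.  Here `Z(x,y)_j = Σ_{i=1}^k y_i x_i^j` for
`j ∈ {0,…,d}`, and a pair is good if the `x_i` are pairwise distinct and the `y_i`
are all nonzero. -/
theorem stmt_0 (F : Type*) [Field F] [Fintype F] (d k : ℕ)
    (hd : Odd d) (hdpos : 0 < d) (hk : k = (d + 1) / 2)
    (z : Fin (d + 1) → F) :
    Nat.card {xy : (Fin k → F) × (Fin k → F) //
        Function.Injective xy.1 ∧ (∀ i, xy.2 i ≠ 0) ∧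
        (fun j : Fin (d + 1) => ∑ i, xy.2 i * xy.1 i ^ (j : ℕ)) = z} = 0 ∨
    Nat.card {xy : (Fin k → F) × (Fin k → F) //
        Function.Injective xy.1 ∧ (∀ i, xy.2 i ≠ 0) ∧
        (fun j : Fin (d + 1) => ∑ i, xy.2 i * xy.1 i ^ (j : ℕ)) = z} = Nat.factorial k := by
  classical
  obtain ⟨m, hm⟩ := hd
  have h2k : 2 * k = d + 1 := by omega
  by_cases hne : Nonempty {xy : (Fin k → F) × (Fin k → F) //
      Function.Injective xy.1 ∧ (∀ i, xy.2 i ≠ 0) ∧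
      (fun j : Fin (d + 1) => ∑ i, xy.2 i * xy.1 i ^ (j : ℕ)) = z}
  · right
    obtain ⟨⟨⟨x₀, y₀⟩, hinj₀, hnz₀, hz₀⟩⟩ := hne
    have mom₀ : ∀ j : Fin (d + 1), ∑ i, y₀ i * x₀ i ^ (j : ℕ) = z j :=
      fun j => congrFun hz₀ j
    set e : Equiv.Perm (Fin k) → {xy : (Fin k → F) × (Fin k → F) //
        Function.Injective xy.1 ∧ (∀ i, xy.2 i ≠ 0) ∧
        (fun j : Fin (d + 1) => ∑ i, xy.2 i * xy.1 i ^ (j : ℕ)) = z} :=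
      fun σ => ⟨(x₀ ∘ σ, y₀ ∘ σ), hinj₀.comp σ.injective, fun i => hnz₀ _, by
        funext j
        simpa using Equiv.sum_comp σ (fun i => y₀ i * x₀ i ^ (j : ℕ)) |>.trans (mom₀ j)⟩
      with he
    have hbij : Function.Bijective e := by
      constructor
      · intro σ σ' hσ
        have h1 : x₀ ∘ σ = x₀ ∘ σ' := congrArg (fun w => w.1.1) hσ
        exact Equiv.ext fun i => hinj₀ (congrFun h1 i)
      · rintro ⟨⟨x, y⟩, hinj, hnz, hz⟩
        have mom : ∀ j < 2 * k, ∑ i, y i * x i ^ j = ∑ i, y₀ i * x₀ i ^ j := by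
          intro j hj
          have hj' : j < d + 1 := by omega
          have h1 := congrFun hz (⟨j, hj'⟩ : Fin (d + 1))
          have h2 := mom₀ (⟨j, hj'⟩ : Fin (d + 1))
          simp only at h1 h2 ⊢
          rw [h1, ← h2]
        obtain ⟨σ, hxσ, hyσ⟩ := unique_perm k x x₀ y y₀ hinj hinj₀ hnz hnz₀ mom
        exact ⟨σ, by rw [he]; exact Subtype.ext (Prod.ext hxσ.symm hyσ.symm)⟩
    rw [Nat.card_congr (Equiv.ofBijective e hbij).symm, Nat.card_eq_fintype_card,
      Fintype.card_perm, Fintype.card_fin]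
  · left
    exact Nat.card_eq_zero.mpr (Or.inl (not_nonempty_iff.mp hne))
end

section
/- Let F be a field and let k, d be natural numbers with 2k ≤ d+1. If (x,y) and (u,v) are good pairs in F^k × F^k with Z(x,y) = Z(u,v), then there exists a permutation σ of {1,…,k} such that u_i = x_{σ(i)} and v_i = y_{σ(i)} for all i ∈ {1,…,k}. -/
open Finset Polynomial

/-- Vandermonde-type vanishing: if all moments up to degree `d ≥ card s - 1` vanish,
the weights vanish. -/
lemma aux_vanish {F : Type*} [Field F] (s : Finset F) (w : F → F) (d : ℕ)
    (hcard : s.card ≤ d + 1)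
    (h : ∀ j : ℕ, j ≤ d → ∑ a ∈ s, w a * a ^ j = 0) :
    ∀ a ∈ s, w a = 0 := by
  classical
  intro a ha
  have hinj : Set.InjOn (id : F → F) s := Function.injective_id.injOn
  set L := Lagrange.basis s id a with hL
  have hdeg : L.natDegree < d + 1 := by
    rw [hL, Lagrange.natDegree_basis hinj ha]
    omega
  have heval : ∀ b : F, L.eval b = ∑ j ∈ Finset.range (d + 1), L.coeff j * b ^ j := by
    intro b
    exact Polynomial.eval_eq_sum_range' hdeg b
  have key : ∑ b ∈ s, w b * L.eval b = 0 := by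
    calc ∑ b ∈ s, w b * L.eval b
        = ∑ b ∈ s, ∑ j ∈ Finset.range (d + 1), L.coeff j * (w b * b ^ j) := by
          refine Finset.sum_congr rfl fun b _ => ?_
          rw [heval b, Finset.mul_sum]
          exact Finset.sum_congr rfl fun j _ => by ring
      _ = ∑ j ∈ Finset.range (d + 1), L.coeff j * ∑ b ∈ s, w b * b ^ j := by
          rw [Finset.sum_comm]
          exact Finset.sum_congr rfl fun j _ => (Finset.mul_sum _ _ _).symm
      _ = 0 := by
          refine Finset.sum_eq_zero fun j hj => ?_
          rw [h j (by simpa using Nat.lt_succ_iff.mp (Finset.mem_range.mp hj)), mul_zero]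
  have hsingle : ∑ b ∈ s, w b * L.eval b = w a := by
    rw [Finset.sum_eq_single_of_mem a ha]
    · have h1 := Lagrange.eval_basis_self hinj ha
      simp only [id] at h1
      rw [hL, h1, mul_one]
    · intro b hb hba
      have h1 := Lagrange.eval_basis_of_ne (v := id) (Ne.symm hba) hb
      simp only [id] at h1
      rw [hL, h1, mul_zero]
  rw [hsingle] at key
  exact key

/-- Let `F` be a field and `k, d` natural numbers with `2k ≤ d+1`.
If `(x,y)` and `(u,v)` are good pairs in `F^k × F^k` with `Z(x,y) = Z(u,v)`,
then there is a permutation `σ` of `{1,…,k}` with `u_i = x_{σ(i)}` and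
`v_i = y_{σ(i)}` for all `i`. -/
theorem stmt_1 (F : Type*) [Field F] (k d : ℕ) (hkd : 2 * k ≤ d + 1)
    (x y u v : Fin k → F)
    (hx : Function.Injective x) (hy : ∀ i, y i ≠ 0)
    (hu : Function.Injective u) (hv : ∀ i, v i ≠ 0)
    (hZ : ∀ j : Fin (d + 1), ∑ i, y i * x i ^ (j : ℕ) = ∑ i, v i * u i ^ (j : ℕ)) :
    ∃ σ : Equiv.Perm (Fin k), ∀ i, u i = x (σ i) ∧ v i = y (σ i) := by
  classical
  set s : Finset F := (Finset.univ.image x) ∪ (Finset.univ.image u) with hs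
  have hscard : s.card ≤ d + 1 := by
    calc s.card ≤ (Finset.univ.image x).card + (Finset.univ.image u).card :=
          Finset.card_union_le _ _
      _ ≤ k + k := by
          have h1 : (Finset.univ.image x).card ≤ k :=
            (Finset.card_image_le).trans (by simp)
          have h2 : (Finset.univ.image u).card ≤ k :=
            (Finset.card_image_le).trans (by simp)
          omega
      _ ≤ d + 1 := by omega
  set w : F → F := fun a =>
    (∑ i ∈ Finset.univ.filter (fun i => x i = a), y i) -
    (∑ i ∈ Finset.univ.filter (fun i => u i = a), v i) with hw
  have hxmem : ∀ i, x i ∈ s := fun i => by simp [hs]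
  have humem : ∀ i, u i ∈ s := fun i => by simp [hs]
  have hfibx : ∀ j : ℕ, ∑ a ∈ s, (∑ i ∈ Finset.univ.filter (fun i => x i = a), y i) * a ^ j
      = ∑ i, y i * x i ^ j := by
    intro j
    rw [← Finset.sum_fiberwise_of_maps_to (fun i _ => hxmem i) (fun i => y i * x i ^ j)]
    refine Finset.sum_congr rfl fun a _ => ?_
    rw [Finset.sum_mul]
    refine Finset.sum_congr rfl fun i hi => ?_
    rw [(Finset.mem_filter.mp hi).2]
  have hfibu : ∀ j : ℕ, ∑ a ∈ s, (∑ i ∈ Finset.univ.filter (fun i => u i = a), v i) * a ^ j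
      = ∑ i, v i * u i ^ j := by
    intro j
    rw [← Finset.sum_fiberwise_of_maps_to (fun i _ => humem i) (fun i => v i * u i ^ j)]
    refine Finset.sum_congr rfl fun a _ => ?_
    rw [Finset.sum_mul]
    refine Finset.sum_congr rfl fun i hi => ?_
    rw [(Finset.mem_filter.mp hi).2]
  have hmom : ∀ j : ℕ, j ≤ d → ∑ a ∈ s, w a * a ^ j = 0 := by
    intro j hj
    have : ∑ a ∈ s, w a * a ^ j
        = (∑ a ∈ s, (∑ i ∈ Finset.univ.filter (fun i => x i = a), y i) * a ^ j)
          - (∑ a ∈ s, (∑ i ∈ Finset.univ.filter (fun i => u i = a), v i) * a ^ j) := by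
      rw [← Finset.sum_sub_distrib]
      exact Finset.sum_congr rfl fun a _ => by rw [hw]; ring
    rw [this, hfibx, hfibu, hZ ⟨j, by omega⟩, sub_self]
  have hwz : ∀ a ∈ s, w a = 0 := aux_vanish s w d hscard hmom
  -- sums over fibers of injective functions
  have hsumu : ∀ i : Fin k, ∑ j ∈ Finset.univ.filter (fun j => u j = u i), v j = v i := by
    intro i
    rw [Finset.sum_eq_single_of_mem i (by simp)]
    intro b hb hbi
    exact absurd (hu (Finset.mem_filter.mp hb).2) hbi
  have hchoice : ∀ i : Fin k, ∃ j, x j = u i ∧ y j = v i := by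
    intro i
    have h0 := hwz (u i) (humem i)
    rw [hw] at h0
    simp only at h0
    rw [hsumu i, sub_eq_zero] at h0
    -- h0 : ∑ j ∈ filter (x · = u i), y j = v i
    have hne : (Finset.univ.filter (fun j => x j = u i)).Nonempty := by
      by_contra hne
      rw [Finset.not_nonempty_iff_eq_empty.mp hne, Finset.sum_empty] at h0
      exact hv i h0.symm
    obtain ⟨j, hj⟩ := hne
    have hxj : x j = u i := (Finset.mem_filter.mp hj).2
    refine ⟨j, hxj, ?_⟩
    rw [← h0, Finset.sum_eq_single_of_mem j hj]
    intro b hb hbj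
    have : x b = x j := (Finset.mem_filter.mp hb).2.trans hxj.symm
    exact absurd (hx this) hbj
  choose σ0 hσ1 hσ2 using hchoice
  have hinj : Function.Injective σ0 := by
    intro i1 i2 h12
    apply hu
    rw [← hσ1 i1, ← hσ1 i2, h12]
  refine ⟨Equiv.ofBijective σ0 (Finite.injective_iff_bijective.mp hinj), fun i => ?_⟩
  exact ⟨(hσ1 i).symm, (hσ2 i).symm⟩
end

section
/- Let q be a prime power and let k ≥ 1, d ≥ 1 be natural numbers. Then the number of quadruples (u,v,x,y) ∈ F_q^k × F_q^k × F_q^k × F_q^k with Z(u,v) = Z(x,y) is at most q^{4k}/q^{d+1} + (qd)^{2k} (as an inequality of real numbers). Equivalently, Σ_{z ∈ F_q^{d+1}} |Z^{-1}(z)|^2 ≤ q^{4k-(d+1)} + (qd)^{2k}. -/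
/-!
For fixed `(u, x)` the solutions `(v, y)` of `Z(u, v) = Z(x, y)` form the kernel of a linear map
on `F^{2k}` whose matrix contains a Vandermonde minor of size `min(n, d + 1)`, where `n` is the
number of distinct entries of `u` and `x`; so this fibre has at most `q^{2k - min(n, d + 1)}`
points. The pairs with `n > d` contribute at most `q^{2k} · q^{2k - (d + 1)}`. At most
`C(q, n) n^{2k} ≤ q^n n^{2k} / n!` pairs have exactly `n ≤ d` distinct entries, so the remaining
pairs contribute at most `q^{2k} ∑_{n ≤ d} n^{2k} / n! ≤ (q d)^{2k}`.
-/

open Finset Matrix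

theorem Matrix.natCard_ker_mulVecLin_mul_pow_rank {F m n : Type*} [Field F] [Fintype F]
    [Fintype m] [Fintype n] (A : Matrix m n F) :
    Nat.card (LinearMap.ker A.mulVecLin) * Fintype.card F ^ A.rank =
      Fintype.card F ^ Fintype.card n := by
  classical
  rw [Nat.card_eq_fintype_card, Module.card_eq_pow_finrank (K := F), Matrix.rank, ← pow_add,
    add_comm, LinearMap.finrank_range_add_finrank_ker, Module.finrank_fintype_fun_eq_card]

theorem Finset.sum_range_pow_div_factorial_le {K : ℕ} (hK : 1 ≤ K) (d : ℕ) :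
    ∑ n ∈ range (d + 1), (n : ℝ) ^ K / n.factorial ≤ (d : ℝ) ^ K := by
  induction d with
  | zero => simp
  | succ d ih =>
    have hK' : K = K - 1 + 1 := by omega
    have hlast : ((d + 1 : ℕ) : ℝ) ^ K / (d + 1).factorial ≤ ((d + 1 : ℕ) : ℝ) ^ (K - 1) := by
      rw [div_le_iff₀ (by positivity)]
      nth_rw 1 [hK', pow_succ]
      gcongr
      exact_mod_cast Nat.self_le_factorial (d + 1)
    have hstep : (d : ℝ) ^ K ≤ ((d + 1 : ℕ) : ℝ) ^ (K - 1) * d := by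
      rw [hK', pow_succ, Nat.add_sub_cancel]
      gcongr
      linarith
    calc ∑ n ∈ range (d + 1 + 1), (n : ℝ) ^ K / n.factorial
        ≤ (d : ℝ) ^ K + ((d + 1 : ℕ) : ℝ) ^ (K - 1) := by
          rw [sum_range_succ]
          gcongr
      _ ≤ ((d + 1 : ℕ) : ℝ) ^ (K - 1) * (d + 1) := by linarith
      _ = ((d + 1 : ℕ) : ℝ) ^ K := by
          nth_rw 2 [hK']
          push_cast
          ring

theorem Finset.card_filter_card_image_eq_le {α β : Type*} [Fintype α] [DecidableEq α]
    [Fintype β] [DecidableEq β] (n : ℕ) :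
    #{w : α → β | #(univ.image w) = n} ≤ (Fintype.card β).choose n * n ^ Fintype.card α := by
  calc #{w : α → β | #(univ.image w) = n}
      ≤ #((powersetCard n (univ : Finset β)).biUnion fun A => Fintype.piFinset fun _ : α => A) := by
        refine card_le_card fun w hw => mem_biUnion.2 ⟨univ.image w, ?_, ?_⟩
        · exact mem_powersetCard.2 ⟨subset_univ _, (mem_filter.1 hw).2⟩
        · exact Fintype.mem_piFinset.2 fun i => mem_image_of_mem w (mem_univ i)
    _ ≤ ∑ A ∈ powersetCard n (univ : Finset β), #(Fintype.piFinset fun _ : α => A) :=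
        card_biUnion_le
    _ = (Fintype.card β).choose n * n ^ Fintype.card α := by
        rw [sum_congr rfl fun A hA => by
          rw [Fintype.card_piFinset, prod_const, card_univ, (mem_powersetCard.1 hA).2], sum_const,
          card_powersetCard, card_univ, smul_eq_mul]

section Moments

variable {F ι : Type*} [Field F] [Fintype ι]

/-- `momentMatrix d x *ᵥ y` is the paper's `Z(x, y)`. -/
def momentMatrix (d : ℕ) (w : ι → F) : Matrix (Fin (d + 1)) ι F :=
  Matrix.of fun j i => w i ^ (j : ℕ)

theorem min_card_image_le_rank_momentMatrix [DecidableEq F] (d : ℕ) (w : ι → F) :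
    min #(univ.image w) (d + 1) ≤ (momentMatrix d w).rank := by
  set r := min #(univ.image w) (d + 1)
  obtain ⟨e⟩ : Nonempty (Fin r ↪ univ.image w) :=
    Function.Embedding.nonempty_of_card_le (by simp [r])
  choose c hc using fun l => mem_image.1 (e l).2
  have hinj : Function.Injective fun l => (e l : F) := Subtype.val_injective.comp e.injective
  have hsub : (momentMatrix d w).submatrix (Fin.castLE (min_le_right _ _)) c =
      (vandermonde fun l => (e l : F))ᵀ := by
    ext j l
    simp [momentMatrix, vandermonde, (hc l).2]
  calc r = (vandermonde fun l => (e l : F))ᵀ.rank := by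
        rw [rank_transpose, rank_of_isUnit, Fintype.card_fin]
        exact (isUnit_iff_isUnit_det _).2 (det_vandermonde_ne_zero_iff.2 hinj).isUnit
    _ ≤ (momentMatrix d w).rank := hsub ▸ rank_submatrix_le _ _ _

theorem natCard_ker_momentMatrix_mul_le [Fintype F] [DecidableEq F] (d : ℕ) (w : ι → F) :
    Nat.card (LinearMap.ker (momentMatrix d w).mulVecLin) *
        Fintype.card F ^ min #(univ.image w) (d + 1) ≤ Fintype.card F ^ Fintype.card ι := by
  rw [← (momentMatrix d w).natCard_ker_mulVecLin_mul_pow_rank]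
  gcongr
  · exact Fintype.card_pos
  · exact min_card_image_le_rank_momentMatrix d w

theorem sum_filter_card_image_le_pow_div_pow_le [Fintype F] [DecidableEq F]
    [DecidableEq ι] (hι : 1 ≤ Fintype.card ι) (d : ℕ) :
    ∑ w : ι → F with #(univ.image w) ≤ d,
        (Fintype.card F : ℝ) ^ Fintype.card ι / (Fintype.card F : ℝ) ^ #(univ.image w) ≤
      ((Fintype.card F : ℝ) * d) ^ Fintype.card ι := by
  set q := Fintype.card F
  set K := Fintype.card ι
  have hq : (q : ℝ) ≠ 0 := by positivity
  rw [← sum_fiberwise_of_maps_to (t := range (d + 1)) (g := fun w => #(univ.image w))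
    fun w hw => mem_range.2 (Nat.lt_succ_of_le (mem_filter.1 hw).2)]
  calc ∑ n ∈ range (d + 1), ∑ w ∈ {w : ι → F | #(univ.image w) ≤ d} with #(univ.image w) = n,
        (q : ℝ) ^ K / (q : ℝ) ^ #(univ.image w)
      ≤ ∑ n ∈ range (d + 1), ((q.choose n * n ^ K : ℕ) : ℝ) * ((q : ℝ) ^ K / (q : ℝ) ^ n) := by
        refine sum_le_sum fun n _ => ?_
        rw [sum_congr rfl fun w hw => by rw [(mem_filter.1 hw).2], sum_const, nsmul_eq_mul]
        gcongr
        exact (card_le_card (filter_subset_filter _ (subset_univ _))).trans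
          (card_filter_card_image_eq_le n)
    _ ≤ ∑ n ∈ range (d + 1), (q : ℝ) ^ K * ((n : ℝ) ^ K / n.factorial) := by
        refine sum_le_sum fun n _ => ?_
        calc ((q.choose n * n ^ K : ℕ) : ℝ) * ((q : ℝ) ^ K / (q : ℝ) ^ n)
            ≤ (q : ℝ) ^ n / n.factorial * (n : ℝ) ^ K * ((q : ℝ) ^ K / (q : ℝ) ^ n) := by
              push_cast
              gcongr
              exact Nat.choose_le_pow_div n q
          _ = (q : ℝ) ^ K * ((n : ℝ) ^ K / n.factorial) := by
              field_simp
    _ ≤ ((q : ℝ) * d) ^ K := by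
        rw [← mul_sum, mul_pow]
        gcongr
        exact sum_range_pow_div_factorial_le hι d

theorem natCard_momentMatrix_mulVec_eq_zero_le [Fintype F] (hι : 1 ≤ Fintype.card ι) (d : ℕ) :
    (Nat.card {p : (ι → F) × (ι → F) // momentMatrix d p.1 *ᵥ p.2 = 0} : ℝ) ≤
      (Fintype.card F : ℝ) ^ (2 * Fintype.card ι) / (Fintype.card F : ℝ) ^ (d + 1) +
        ((Fintype.card F : ℝ) * d) ^ Fintype.card ι := by
  classical
  set q := Fintype.card F
  set K := Fintype.card ι
  have hfibre (w : ι → F) : (Nat.card (LinearMap.ker (momentMatrix d w).mulVecLin) : ℝ) ≤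
      (q : ℝ) ^ K / (q : ℝ) ^ (d + 1) +
        if #(univ.image w) ≤ d then (q : ℝ) ^ K / (q : ℝ) ^ #(univ.image w) else 0 := by
    have h := natCard_ker_momentMatrix_mul_le d w
    split_ifs with hw
    · rw [min_eq_left (by omega)] at h
      refine le_add_of_nonneg_of_le (by positivity) ((le_div_iff₀ (by positivity)).2 ?_)
      exact_mod_cast h
    · rw [min_eq_right (by omega)] at h
      rw [add_zero, le_div_iff₀ (by positivity)]
      exact_mod_cast h
  rw [Nat.card_congr (Equiv.subtypeProdEquivSigmaSubtype fun w c => momentMatrix d w *ᵥ c = 0),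
    Nat.card_sigma]
  push_cast
  calc ∑ w : ι → F, (Nat.card {c // momentMatrix d w *ᵥ c = 0} : ℝ)
      ≤ ∑ w : ι → F, ((q : ℝ) ^ K / (q : ℝ) ^ (d + 1) +
          if #(univ.image w) ≤ d then (q : ℝ) ^ K / (q : ℝ) ^ #(univ.image w) else 0) :=
        sum_le_sum fun w _ => hfibre w
    _ = (q : ℝ) ^ K * ((q : ℝ) ^ K / (q : ℝ) ^ (d + 1)) +
          ∑ w : ι → F with #(univ.image w) ≤ d, (q : ℝ) ^ K / (q : ℝ) ^ #(univ.image w) := by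
        rw [sum_add_distrib, sum_const, card_univ, Fintype.card_fun, nsmul_eq_mul, sum_filter]
        push_cast
        rfl
    _ ≤ (q : ℝ) ^ (2 * K) / (q : ℝ) ^ (d + 1) + ((q : ℝ) * d) ^ K := by
        rw [mul_div_assoc', ← pow_add, ← two_mul]
        gcongr
        exact sum_filter_card_image_le_pow_div_pow_le hι d

theorem momentMatrix_sumElim_mulVec_sumElim_neg {κ : Type*} [Fintype κ] (d : ℕ) (u : ι → F)
    (x : κ → F) (v : ι → F) (y : κ → F) :
    momentMatrix d (Sum.elim u x) *ᵥ Sum.elim v (-y) =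
      (fun j : Fin (d + 1) => ∑ i, v i * u i ^ (j : ℕ)) -
        (fun j : Fin (d + 1) => ∑ i, y i * x i ^ (j : ℕ)) := by
  ext j
  simp [momentMatrix, mulVec, dotProduct, Fintype.sum_sum_type, mul_comm, sub_eq_add_neg]

end Moments

theorem stmt_4_general (F : Type*) [Field F] [Fintype F] (k d : ℕ) (hk : 1 ≤ k) :
    (Nat.card {t : ((Fin k → F) × (Fin k → F)) × ((Fin k → F) × (Fin k → F)) //
        (fun j : Fin (d + 1) => ∑ i, t.1.2 i * t.1.1 i ^ (j : ℕ)) =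
        (fun j : Fin (d + 1) => ∑ i, t.2.2 i * t.2.1 i ^ (j : ℕ))} : ℝ) ≤
      (Fintype.card F : ℝ) ^ (4 * k) / (Fintype.card F : ℝ) ^ (d + 1) +
        ((Fintype.card F : ℝ) * (d : ℝ)) ^ (2 * k) := by
  let e : ((Fin k → F) × (Fin k → F)) × ((Fin k → F) × (Fin k → F)) ≃
      (Fin k ⊕ Fin k → F) × (Fin k ⊕ Fin k → F) :=
    (Equiv.prodProdProdComm _ _ _ _).trans <|
      Equiv.prodCongr (Equiv.sumArrowEquivProdArrow _ _ _).symm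
        (((Equiv.refl _).prodCongr (Equiv.neg _)).trans (Equiv.sumArrowEquivProdArrow _ _ _).symm)
  calc _ = (Nat.card {p : (Fin k ⊕ Fin k → F) × (Fin k ⊕ Fin k → F) //
        momentMatrix d p.1 *ᵥ p.2 = 0} : ℝ) := by
        congr 1
        refine Nat.card_congr (e.subtypeEquiv fun t => ?_)
        change _ ↔ momentMatrix d (Sum.elim t.1.1 t.2.1) *ᵥ Sum.elim t.1.2 (-t.2.2) = 0
        rw [momentMatrix_sumElim_mulVec_sumElim_neg, sub_eq_zero]
    _ ≤ _ := by
        convert natCard_momentMatrix_mulVec_eq_zero_le (ι := Fin k ⊕ Fin k) (by simp; omega) d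
          using 3 <;> rw [Fintype.card_sum, Fintype.card_fin] <;> ring

/-- Let `q` be a prime power (`F` the finite field with `q` elements) and
`k ≥ 1, d ≥ 1`.  Then the number of quadruples `(u,v,x,y)` with `Z(u,v) = Z(x,y)`
is at most `q^{4k}/q^{d+1} + (qd)^{2k}` as real numbers, i.e.
`Σ_z |Z^{-1}(z)|² ≤ q^{4k-(d+1)} + (qd)^{2k}`. -/
theorem stmt_4 (F : Type*) [Field F] [Fintype F] (k d : ℕ) (hk : 1 ≤ k) (hd : 1 ≤ d) :
    (Nat.card {t : ((Fin k → F) × (Fin k → F)) × ((Fin k → F) × (Fin k → F)) //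
        (fun j : Fin (d + 1) => ∑ i, t.1.2 i * t.1.1 i ^ (j : ℕ)) =
        (fun j : Fin (d + 1) => ∑ i, t.2.2 i * t.2.1 i ^ (j : ℕ))} : ℝ) ≤
      (Fintype.card F : ℝ) ^ (4 * k) / (Fintype.card F : ℝ) ^ (d + 1) +
        ((Fintype.card F : ℝ) * (d : ℝ)) ^ (2 * k) :=
  stmt_4_general F k d hk
end

section
/- Let q be a prime power and let k ≥ 1, d ≥ 1 be natural numbers. Then q^{2k} · |{z ∈ F_q^{d+1} : Z^{-1}(z) = ∅}| ≤ d^{2k} · q^{2(d+1)}. Equivalently, the number of z ∈ F_q^{d+1} not in the range of Z is at most d^{2k} q^{2(d+1)-2k}. -/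
/-!
Let `N z` count the preimages of `z` under `Z`. Then `∑ N z = q^{2k}`, so when `2k > d + 1` the
mean of `N` is `M = q^{2k-d-1}`, and each missed point contributes `M²` to
`∑ (N z - M)² = ∑ N z² - q^{d+1} M²`. The sum `∑ N z²` counts collisions
`Z(x, y) = Z(x', y')`, i.e. pairs `(t, w) ∈ F^{2k} × F^{2k}` with `∑ wᵢ tᵢ^j = 0` for all `j ≤ d`.
If `t` takes `m` distinct values, Vandermonde leaves at most `q^{2k - min(m, d+1)}` such `w`.
The `t` with `m > d` contribute at most `q^{2k} M`; those with `m ≤ d` factor as `t = a ∘ c` with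
`c : [2k] → [d]` in at least `q^{d-m}` ways, so they contribute at most `d^{2k} q^{2k}`.
-/

open Finset

section Fibers

variable {α β : Type*} [Fintype α] [Fintype β] [DecidableEq β]

theorem card_collisions_eq_sum_sq (f : α → β) :
    #{p : α × α | f p.1 = f p.2} = ∑ b, #{a | f a = b} ^ 2 := by
  rw [card_eq_sum_card_fiberwise (f := fun p : α × α => f p.1) (t := univ)
    (fun _ _ => mem_univ _)]
  refine sum_congr rfl fun b _ => ?_
  rw [sq, ← card_product, filter_filter]
  congr 1
  ext p
  simp only [mem_filter, mem_univ, true_and, mem_product]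
  constructor
  · rintro ⟨h, rfl⟩; exact ⟨rfl, h.symm⟩
  · rintro ⟨h₁, h₂⟩; exact ⟨h₁.trans h₂.symm, h₁⟩

theorem ncard_compl_range_mul_sq_add_le (f : α → β) {M : ℕ}
    (hM : Fintype.card α = Fintype.card β * M) :
    {b | b ∉ Set.range f}.ncard * M ^ 2 + Fintype.card β * M ^ 2 ≤
      #{p : α × α | f p.1 = f p.2} := by
  set N : β → ℕ := fun b => #{a | f a = b}
  have hsum : ∑ b, N b = Fintype.card β * M := by
    rw [← hM, ← card_univ, card_eq_sum_card_fiberwise (f := f) (t := univ)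
      (fun _ _ => mem_univ _)]
  have hmissed : {b | b ∉ Set.range f}.ncard = #{b | N b = 0} := by
    rw [← Set.ncard_coe_finset]
    congr 1
    ext b
    simp [N, filter_eq_empty_iff]
  have hzero : (#{b | N b = 0} : ℤ) * M ^ 2 ≤ ∑ b, ((N b : ℤ) - M) ^ 2 := by
    calc (#{b | N b = 0} : ℤ) * M ^ 2 = ∑ b with N b = 0, ((N b : ℤ) - M) ^ 2 := by
          rw [sum_congr rfl fun b hb => by rw [(mem_filter.1 hb).2]]
          simp
      _ ≤ ∑ b, ((N b : ℤ) - M) ^ 2 :=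
          sum_le_sum_of_subset_of_nonneg (filter_subset _ _) fun _ _ _ => sq_nonneg _
  have hexpand : ∑ b, ((N b : ℤ) - M) ^ 2 =
      ∑ b, (N b : ℤ) ^ 2 - Fintype.card β * M ^ 2 := by
    have hsumℤ : ∑ b, (N b : ℤ) = Fintype.card β * M := by exact_mod_cast hsum
    simp only [sub_sq, sum_add_distrib, sum_sub_distrib, ← sum_mul, ← mul_sum, hsumℤ,
      sum_const, card_univ, nsmul_eq_mul]
    ring
  rw [hmissed, card_collisions_eq_sum_sq]
  have hineq : ((#{b | N b = 0} * M ^ 2 + Fintype.card β * M ^ 2 : ℕ) : ℤ) ≤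
      ((∑ b, N b ^ 2 : ℕ) : ℤ) := by
    push_cast
    linarith
  exact_mod_cast hineq

end Fibers

section Factorization

variable {ι α β : Type*} [Fintype ι] [DecidableEq ι] [Fintype α] [DecidableEq α] [Fintype β]
  [DecidableEq β]

theorem pow_sub_card_image_le_card_factorizations (t : ι → α)
    (ht : #(univ.image t) ≤ Fintype.card β) :
    Fintype.card α ^ (Fintype.card β - #(univ.image t)) ≤
      #{p : (ι → β) × (β → α) | p.2 ∘ p.1 = t} := by
  set S := univ.image t
  have hcard : Fintype.card (S ⊕ Fin (Fintype.card β - #S)) = Fintype.card β := by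
    simp only [Fintype.card_sum, Fintype.card_coe, Fintype.card_fin]
    omega
  -- `c` sends `t i` into the `S`-part of `β ≃ S ⊕ Fin (|β| - |S|)`; `a` is free on the rest
  set σ := Fintype.equivOfCardEq hcard
  let c : ι → β := fun i => σ (.inl ⟨t i, mem_image_of_mem t (mem_univ i)⟩)
  calc Fintype.card α ^ (Fintype.card β - #S)
      = #(univ : Finset (Fin (Fintype.card β - #S) → α)) := by simp
    _ ≤ _ := by
      refine card_le_card_of_injOn (fun g => (c, Sum.elim Subtype.val g ∘ σ.symm)) ?_ ?_
      · intro g _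
        simp only [coe_filter, mem_univ, true_and, Set.mem_ofPred_eq]
        funext i
        simp [c]
      · intro g _ g' _ h
        funext j
        simpa using congrFun (congrArg Prod.snd h) (σ (.inr j))

theorem sum_pow_sub_card_image_le :
    ∑ t : ι → α with #(univ.image t) ≤ Fintype.card β,
        Fintype.card α ^ (Fintype.card β - #(univ.image t)) ≤
      Fintype.card β ^ Fintype.card ι * Fintype.card α ^ Fintype.card β := by
  calc _ ≤ ∑ t : ι → α with #(univ.image t) ≤ Fintype.card β,
          #{p : (ι → β) × (β → α) | p.2 ∘ p.1 = t} :=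
        sum_le_sum fun t ht => pow_sub_card_image_le_card_factorizations t (mem_filter.1 ht).2
    _ ≤ #(univ : Finset ((ι → β) × (β → α))) := by
        rw [sum_card_fiberwise_eq_card_filter]
        exact card_filter_le _ _
    _ = _ := by simp

omit [Fintype β] [DecidableEq β] in
theorem sum_pow_card_sub_card_image_le [Nonempty α] (d : ℕ) :
    ∑ t : ι → α with #(univ.image t) ≤ d,
        Fintype.card α ^ (Fintype.card ι - #(univ.image t)) ≤
      d ^ Fintype.card ι * Fintype.card α ^ Fintype.card ι := by
  set q := Fintype.card α
  set n := Fintype.card ι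
  have hbound := sum_pow_sub_card_image_le (ι := ι) (α := α) (β := Fin d)
  simp only [Fintype.card_fin] at hbound
  refine Nat.le_of_mul_le_mul_left ?_ (pow_pos (Fintype.card_pos (α := α)) d)
  calc q ^ d * ∑ t : ι → α with #(univ.image t) ≤ d, q ^ (n - #(univ.image t))
      = (∑ t : ι → α with #(univ.image t) ≤ d, q ^ (d - #(univ.image t))) * q ^ n := by
        rw [mul_sum, sum_mul]
        refine sum_congr rfl fun t ht => ?_
        have hn : #(univ.image t) ≤ n := card_image_le.trans_eq card_univ
        rw [← pow_add, ← pow_add]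
        congr 1
        have := (mem_filter.1 ht).2
        omega
    _ ≤ d ^ n * q ^ d * q ^ n := Nat.mul_le_mul_right _ hbound
    _ = q ^ d * (d ^ n * q ^ n) := by ring

end Factorization

section PowerMoments

variable {ι F : Type*} [Fintype ι]

def powerMoments [CommRing F] (d : ℕ) (x y : ι → F) : Fin (d + 1) → F :=
  fun j => ∑ i, y i * x i ^ (j : ℕ)

theorem powerMoments_sub [CommRing F] (d : ℕ) (x y y' : ι → F) :
    powerMoments d x (y - y') = powerMoments d x y - powerMoments d x y' := by
  ext j
  simp [powerMoments, sub_mul]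

theorem powerMoments_sumElim {κ : Type*} [Fintype κ] [CommRing F] (d : ℕ) (x y : ι → F)
    (x' y' : κ → F) :
    powerMoments d (Sum.elim x x') (Sum.elim y y') =
      powerMoments d x y + powerMoments d x' y' := by
  ext j
  simp [powerMoments, Fintype.sum_sum_type]

theorem powerMoments_neg [CommRing F] (d : ℕ) (x y : ι → F) :
    powerMoments d x (-y) = -powerMoments d x y := by
  ext j
  simp [powerMoments]

theorem card_powerMoments_collisions [DecidableEq ι] [CommRing F] [Fintype F] [DecidableEq F]
    (d : ℕ) :
    #{p : ((ι → F) × (ι → F)) × ((ι → F) × (ι → F)) |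
        powerMoments d p.1.1 p.1.2 = powerMoments d p.2.1 p.2.2} =
      #{p : (ι ⊕ ι → F) × (ι ⊕ ι → F) | powerMoments d p.1 p.2 = 0} := by
  let e : ((ι → F) × (ι → F)) × ((ι → F) × (ι → F)) ≃ (ι ⊕ ι → F) × (ι ⊕ ι → F) :=
    ((Equiv.prodCongr (Equiv.refl _) (Equiv.prodCongr (Equiv.refl _) (Equiv.neg _))).trans
      (Equiv.prodProdProdComm _ _ _ _)).trans
      (Equiv.prodCongr (Equiv.sumArrowEquivProdArrow _ _ _).symm
        (Equiv.sumArrowEquivProdArrow _ _ _).symm)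
  refine card_equiv e fun p => ?_
  simp only [mem_filter, mem_univ, true_and]
  change _ ↔ powerMoments d (Sum.elim p.1.1 p.2.1) (Sum.elim p.1.2 (-p.2.2)) = 0
  rw [powerMoments_sumElim, powerMoments_neg, ← sub_eq_add_neg, sub_eq_zero]

theorem eq_zero_of_powerMoments_eq_zero [CommRing F] [IsDomain F] {d : ℕ} {t w : ι → F}
    {R : Finset ι} (hR : Set.InjOn t R) (hRd : #R ≤ d + 1) (hw : powerMoments d t w = 0)
    (hsupp : ∀ i ∉ R, w i = 0) : ∀ i ∈ R, w i = 0 := by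
  set e := R.equivFin.symm
  have hinj : Function.Injective fun a => t (e a) :=
    fun a b hab => e.injective (Subtype.ext (hR (e a).2 (e b).2 hab))
  have hmoments : ∀ j : Fin #R, ∑ a, w (e a) * t (e a) ^ (j : ℕ) = 0 := by
    intro j
    rw [e.sum_comp (fun r : R => w r * t r ^ (j : ℕ)),
      sum_coe_sort R (fun r => w r * t r ^ (j : ℕ)),
      sum_subset (subset_univ R) fun i _ hi => by rw [hsupp i hi, zero_mul]]
    exact congrFun hw ⟨j, by omega⟩
  intro i hi
  simpa using congrFun (Matrix.eq_zero_of_forall_pow_sum_mul_pow_eq_zero hinj hmoments)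
    (e.symm ⟨i, hi⟩)

theorem card_powerMoments_eq_zero_le [DecidableEq ι] [CommRing F] [IsDomain F] [Fintype F]
    [DecidableEq F] {d : ℕ} (t : ι → F) {R : Finset ι} (hR : Set.InjOn t R) (hRd : #R ≤ d + 1) :
    #{w | powerMoments d t w = 0} ≤ Fintype.card F ^ (Fintype.card ι - #R) := by
  calc #{w | powerMoments d t w = 0}
      ≤ #(univ : Finset (↥Rᶜ → F)) := by
        refine card_le_card_of_injOn (fun w i => w i) (fun _ _ => mem_coe.2 (mem_univ _)) ?_
        intro w hw w' hw' hres
        simp only [coe_filter, mem_univ, true_and, Set.mem_ofPred_eq] at hw hw'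
        have hoff : ∀ i ∉ R, (w - w') i = 0 := fun i hi =>
          sub_eq_zero.2 (congrFun hres ⟨i, mem_compl.2 hi⟩)
        have hon := eq_zero_of_powerMoments_eq_zero hR hRd
          (by rw [powerMoments_sub, hw, hw', sub_zero]) hoff
        funext i
        exact sub_eq_zero.1 (if hi : i ∈ R then hon i hi else hoff i hi)
    _ = Fintype.card F ^ (Fintype.card ι - #R) := by
        simp

theorem card_powerMoments_eq_zero_le_pow_sub_min [DecidableEq ι] [CommRing F] [IsDomain F]
    [Fintype F] [DecidableEq F] (d : ℕ) (t : ι → F) :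
    #{w | powerMoments d t w = 0} ≤
      Fintype.card F ^ (Fintype.card ι - min #(univ.image t) (d + 1)) := by
  obtain ⟨S, hS, hScard⟩ := exists_subset_card_eq (min_le_left #(univ.image t) (d + 1))
  have hsurj : Set.SurjOn t Set.univ S := fun s hs => by
    simpa using hS hs
  obtain ⟨R, -, hR, hRS⟩ := exists_subset_injOn_image_eq_of_surjOn _ _ hsurj
  have hRcard : #R = min #(univ.image t) (d + 1) := by
    rw [← hScard, ← hRS, card_image_of_injOn hR]
  rw [← hRcard]
  exact card_powerMoments_eq_zero_le t hR (hRcard ▸ min_le_right _ _)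

theorem card_powerMoments_eq_zero_pairs_le [DecidableEq ι] [CommRing F] [IsDomain F] [Fintype F]
    [DecidableEq F] (d : ℕ) :
    #{p : (ι → F) × (ι → F) | powerMoments d p.1 p.2 = 0} ≤
      d ^ Fintype.card ι * Fintype.card F ^ Fintype.card ι +
        Fintype.card F ^ Fintype.card ι * Fintype.card F ^ (Fintype.card ι - (d + 1)) := by
  set q := Fintype.card F
  set n := Fintype.card ι
  have hfibers : #{p : (ι → F) × (ι → F) | powerMoments d p.1 p.2 = 0} =
      ∑ t : ι → F, #{w | powerMoments d t w = 0} := by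
    simp only [card_filter, Fintype.sum_prod_type]
  rw [hfibers, ← sum_filter_add_sum_filter_not univ fun t => #(univ.image t) ≤ d]
  refine add_le_add ?_ ?_
  · calc ∑ t : ι → F with #(univ.image t) ≤ d, #{w | powerMoments d t w = 0}
        ≤ ∑ t : ι → F with #(univ.image t) ≤ d, q ^ (n - #(univ.image t)) := by
          refine sum_le_sum fun t ht => ?_
          have hmin : min #(univ.image t) (d + 1) = #(univ.image t) :=
            min_eq_left (Nat.le_succ_of_le (mem_filter.1 ht).2)
          simpa [hmin] using card_powerMoments_eq_zero_le_pow_sub_min d t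
      _ ≤ d ^ n * q ^ n := sum_pow_card_sub_card_image_le d
  · calc ∑ t : ι → F with ¬#(univ.image t) ≤ d, #{w | powerMoments d t w = 0}
        ≤ #{t : ι → F | ¬#(univ.image t) ≤ d} • q ^ (n - (d + 1)) := by
          refine sum_le_card_nsmul _ _ _ fun t ht => ?_
          have hmin : min #(univ.image t) (d + 1) = d + 1 :=
            min_eq_right (not_le.1 (mem_filter.1 ht).2)
          simpa [hmin] using card_powerMoments_eq_zero_le_pow_sub_min d t
      _ ≤ q ^ n * q ^ (n - (d + 1)) := by
          rw [smul_eq_mul]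
          refine Nat.mul_le_mul_right _ ((card_filter_le _ _).trans_eq ?_)
          simp [q, n]

end PowerMoments

theorem stmt_5_general (F : Type*) [Field F] [Fintype F] (k d : ℕ) (hd : 1 ≤ d) :
    Fintype.card F ^ (2 * k) *
      Set.ncard {z : Fin (d + 1) → F |
        z ∉ Set.range (fun xy : (Fin k → F) × (Fin k → F) =>
          fun j : Fin (d + 1) => ∑ i, xy.2 i * xy.1 i ^ (j : ℕ))} ≤
      d ^ (2 * k) * Fintype.card F ^ (2 * (d + 1)) := by
  classical
  set q := Fintype.card F with hq
  set Z := fun xy : (Fin k → F) × (Fin k → F) => powerMoments d xy.1 xy.2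
  change q ^ (2 * k) * {z | z ∉ Set.range Z}.ncard ≤ _
  set U := {z | z ∉ Set.range Z}.ncard with hU
  by_cases hsmall : 2 * k ≤ d + 1
  · have hUle : U ≤ q ^ (d + 1) := (Set.ncard_le_card _).trans_eq (by simp [q])
    calc q ^ (2 * k) * U ≤ q ^ (d + 1) * q ^ (d + 1) :=
          Nat.mul_le_mul (Nat.pow_le_pow_right Fintype.card_pos hsmall) hUle
      _ = 1 * q ^ (2 * (d + 1)) := by ring
      _ ≤ d ^ (2 * k) * q ^ (2 * (d + 1)) := Nat.mul_le_mul_right _ (Nat.one_le_pow _ _ hd)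
  obtain ⟨a, ha⟩ : ∃ a, 2 * k = d + 1 + a := ⟨2 * k - (d + 1), by omega⟩
  have hM : Fintype.card ((Fin k → F) × (Fin k → F)) =
      Fintype.card (Fin (d + 1) → F) * q ^ a := by
    simp only [Fintype.card_prod, Fintype.card_fun, Fintype.card_fin, ← pow_add, ← two_mul, ha,
      hq]
  have hcollisions := (ncard_compl_range_mul_sq_add_le Z hM).trans_eq
    (card_powerMoments_collisions (ι := Fin k) d)
  have hpairs := card_powerMoments_eq_zero_pairs_le (ι := Fin k ⊕ Fin k) (F := F) d
  simp only [Fintype.card_sum, Fintype.card_fin, Fintype.card_fun, ← two_mul, ha,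
    Nat.add_sub_cancel_left, ← hq, ← hU] at hcollisions hpairs
  have hUa : U * q ^ a * q ^ a ≤ d ^ (2 * k) * q ^ (d + 1) * q ^ a := by
    have h := hcollisions.trans hpairs
    rw [← ha, show q ^ (2 * k) = q ^ (d + 1) * q ^ a by rw [ha, pow_add]] at h
    linarith
  calc q ^ (2 * k) * U = U * q ^ a * q ^ (d + 1) := by rw [ha]; ring
    _ ≤ d ^ (2 * k) * q ^ (d + 1) * q ^ (d + 1) :=
        Nat.mul_le_mul_right _ (Nat.le_of_mul_le_mul_right hUa (pow_pos Fintype.card_pos a))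
    _ = d ^ (2 * k) * q ^ (2 * (d + 1)) := by ring

/-- Let `q` be a prime power (`F` the finite field with `q` elements) and
`k ≥ 1, d ≥ 1`.  Then `q^{2k} · |{z ∈ F_q^{d+1} : Z⁻¹(z) = ∅}| ≤ d^{2k} · q^{2(d+1)}`,
i.e. the number of `z` not in the range of `Z` is at most `d^{2k} q^{2(d+1)-2k}`. -/
theorem stmt_5 (F : Type*) [Field F] [Fintype F] (k d : ℕ) (hk : 1 ≤ k) (hd : 1 ≤ d) :
    Fintype.card F ^ (2 * k) *
      Set.ncard {z : Fin (d + 1) → F |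
        z ∉ Set.range (fun xy : (Fin k → F) × (Fin k → F) =>
          fun j : Fin (d + 1) => ∑ i, xy.2 i * xy.1 i ^ (j : ℕ))} ≤
      d ^ (2 * k) * Fintype.card F ^ (2 * (d + 1)) :=
  stmt_5_general F k d hd
end

section
/- Let H be a finite-dimensional complex inner product space, let C be a finite index set, let ψ_c ∈ H for c ∈ C satisfy ‖ψ_c‖ ≤ 1, and let E_c (c ∈ C) be orthogonal projections on H whose ranges are pairwise orthogonal (i.e., E_c E_{c'} = 0 for c ≠ c'). Then Σ_{c ∈ C} Re⟨ψ_c, E_c ψ_c⟩ ≤ dim span{ψ_c : c ∈ C}. In particular, if c is drawn uniformly from C, the probability of correctly identifying c by measuring ψ_c with the measurement {E_c} is at most dim span{ψ_c : c ∈ C}/|C|. -/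
/-!
For a star projection `p`, `Re⟪x, p x⟫ = ‖p x‖²`. Expanding each `ψ_c` in an orthonormal basis
`(v_i)` of `V = span {ψ_c}` and using Cauchy–Schwarz with `‖ψ_c‖ ≤ 1` gives
`‖E_c ψ_c‖² ≤ ∑_i ‖E_c v_i‖²`. Since `∑_c E_c` is again a star projection, hence of norm at most
one, `∑_c ‖E_c v_i‖² ≤ ‖v_i‖² = 1` for each `i`, and summing over `i` gives `dim V`.
-/

open scoped InnerProductSpace

theorem IsStarProjection.finsetSum {R ι : Type*} [NonUnitalNonAssocSemiring R] [StarRing R]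
    {p : ι → R} (hp : ∀ i, IsStarProjection (p i)) (hpq : Pairwise fun i j ↦ p i * p j = 0)
    (s : Finset ι) : IsStarProjection (∑ i ∈ s, p i) := by
  classical
  induction s using Finset.induction_on with
  | empty => simp [IsStarProjection.zero]
  | insert i s his ih =>
    rw [Finset.sum_insert his]
    refine (hp i).add ih ?_
    rw [Finset.mul_sum]
    exact Finset.sum_eq_zero fun j hj ↦ hpq (ne_of_mem_of_not_mem hj his).symm

section InnerProductSpace

variable {𝕜 E F : Type*} [RCLike 𝕜] [NormedAddCommGroup E] [InnerProductSpace 𝕜 E]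

theorem IsStarProjection.re_inner_apply_self [CompleteSpace E]
    {p : E →L[𝕜] E} (hp : IsStarProjection p) (x : E) :
    RCLike.re ⟪x, p x⟫_𝕜 = ‖p x‖ ^ 2 := by
  have hpp : p (p x) = p x := congr($(hp.isIdempotentElem.eq) x)
  rw [← hpp, ← ContinuousLinearMap.adjoint_inner_left, ← ContinuousLinearMap.star_eq_adjoint,
    hp.isSelfAdjoint.star_eq, hpp, inner_self_eq_norm_sq]

theorem IsStarProjection.sum_norm_sq_apply_le [CompleteSpace E]
    {ι : Type*} [Fintype ι] {p : ι → E →L[𝕜] E} (hp : ∀ i, IsStarProjection (p i))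
    (hpq : Pairwise fun i j ↦ p i * p j = 0) (x : E) :
    ∑ i, ‖p i x‖ ^ 2 ≤ ‖x‖ ^ 2 := by
  have hP := IsStarProjection.finsetSum hp hpq Finset.univ
  set P := ∑ i, p i
  calc ∑ i, ‖p i x‖ ^ 2 = ‖P x‖ ^ 2 := by
        rw [← hP.re_inner_apply_self, sum_apply, inner_sum, map_sum]
        exact Finset.sum_congr rfl fun i _ ↦ ((hp i).re_inner_apply_self x).symm
    _ ≤ ‖x‖ ^ 2 := by
        gcongr
        exact P.le_of_opNorm_le hP.norm_le x |>.trans_eq (one_mul _)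

variable [NormedAddCommGroup F] [InnerProductSpace 𝕜 F]

theorem OrthonormalBasis.norm_apply_sq_le {ι : Type*} [Fintype ι] (b : OrthonormalBasis ι 𝕜 E)
    (T : E →ₗ[𝕜] F) (x : E) : ‖T x‖ ^ 2 ≤ ‖x‖ ^ 2 * ∑ i, ‖T (b i)‖ ^ 2 := by
  have hTx : ‖T x‖ ≤ ∑ i, ‖⟪b i, x⟫_𝕜‖ * ‖T (b i)‖ := by
    conv_lhs => rw [← b.sum_repr' x]
    simp only [map_sum, map_smul]
    exact (norm_sum_le _ _).trans (Finset.sum_le_sum fun i _ ↦ (norm_smul_le _ _))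
  calc ‖T x‖ ^ 2 ≤ (∑ i, ‖⟪b i, x⟫_𝕜‖ * ‖T (b i)‖) ^ 2 := by gcongr
    _ ≤ (∑ i, ‖⟪b i, x⟫_𝕜‖ ^ 2) * ∑ i, ‖T (b i)‖ ^ 2 := Finset.sum_mul_sq_le_sq_mul_sq _ _ _
    _ = ‖x‖ ^ 2 * ∑ i, ‖T (b i)‖ ^ 2 := by rw [b.sum_sq_norm_inner_right]

end InnerProductSpace

/-- Let `H` be a finite-dimensional complex inner product space, `C` a
finite index set, `ψ_c ∈ H` with `‖ψ_c‖ ≤ 1`, and `E_c` orthogonal projections with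
pairwise orthogonal ranges (`E_c E_{c'} = 0` for `c ≠ c'`).  Then
`Σ_c Re⟨ψ_c, E_c ψ_c⟩ ≤ dim span{ψ_c : c ∈ C}`. -/
theorem stmt_7 (H : Type*) [NormedAddCommGroup H] [InnerProductSpace ℂ H]
    [FiniteDimensional ℂ H] (C : Type*) [Fintype C]
    (ψ : C → H) (hψ : ∀ c, ‖ψ c‖ ≤ 1)
    (E : C → H →L[ℂ] H)
    (hidem : ∀ c, (E c).comp (E c) = E c)
    (hsa : ∀ c, IsSelfAdjoint (E c))
    (horth : ∀ c c', c ≠ c' → (E c).comp (E c') = 0) :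
    ∑ c, (inner ℂ (ψ c) (E c (ψ c)) : ℂ).re ≤
      (Module.finrank ℂ (Submodule.span ℂ (Set.range ψ)) : ℝ) := by
  have hE : ∀ c, IsStarProjection (E c) := fun c ↦ ⟨hidem c, hsa c⟩
  set V := Submodule.span ℂ (Set.range ψ)
  let b := stdOrthonormalBasis ℂ V
  have hψV (c : C) : ψ c = V.subtype ⟨ψ c, Submodule.subset_span ⟨c, rfl⟩⟩ := rfl
  have hψb (c : C) : ‖E c (ψ c)‖ ^ 2 ≤ ∑ i, ‖E c (b i)‖ ^ 2 := by
    rw [hψV c]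
    refine (b.norm_apply_sq_le ((E c : H →ₗ[ℂ] H) ∘ₗ V.subtype) _).trans ?_
    refine mul_le_of_le_one_left (by positivity) ?_
    exact pow_le_one₀ (norm_nonneg _) (hψ c)
  calc ∑ c, (inner ℂ (ψ c) (E c (ψ c))).re = ∑ c, ‖E c (ψ c)‖ ^ 2 :=
        Finset.sum_congr rfl fun c _ ↦ (hE c).re_inner_apply_self (ψ c)
    _ ≤ ∑ c, ∑ i, ‖E c (b i)‖ ^ 2 := Finset.sum_le_sum fun c _ ↦ hψb c
    _ = ∑ i, ∑ c, ‖E c (b i)‖ ^ 2 := Finset.sum_comm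
    _ ≤ ∑ i, ‖b i‖ ^ 2 := Finset.sum_le_sum fun i _ ↦
        IsStarProjection.sum_norm_sq_apply_le hE (fun c c' h ↦ horth c c' h) _
    _ = Module.finrank ℂ V := by simp [b.norm_eq_one]
end

section
/- Let q be a prime power, let k, d be natural numbers, let e : F_q → ℂ be an additive character, let H be a finite-dimensional complex inner product space, and let φ : F_q^k × F_q^k → H. For c ∈ F_q^{d+1}, define ψ_c := Σ_{(x,y)} e(c · Z(x,y)) φ(x,y), and assume ‖ψ_c‖ ≤ 1 for all c. Let E_c (c ∈ F_q^{d+1}) be orthogonal projections on H with pairwise orthogonal ranges (E_c E_{c'} = 0 for c ≠ c'). Then Σ_{c ∈ F_q^{d+1}} Re⟨ψ_c, E_c ψ_c⟩ ≤ |R_k|; that is, the average success probability of identifying a uniformly random c from the state ψ_c is at most |R_k|/q^{d+1}. -/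
/-!
Grouping the terms of `ψ c` by the character `c ↦ e (c ⬝ᵥ Z(x,y))` writes `ψ c = ∑_χ χ c • v χ`
with at most `|R_k|` distinct characters `χ`. Distinct characters are orthogonal, so Parseval
turns `∑_c ‖ψ c‖² ≤ q^(d+1)` into `∑_χ ‖v χ‖² ≤ 1`. Cauchy–Schwarz bounds `‖E c (ψ c)‖²` by
`|R_k| ∑_χ ‖E c (v χ)‖²`, and for pairwise orthogonal projections `∑_c ‖E c v‖² ≤ ‖v‖²`.
-/

open Finset ComplexConjugate
open scoped InnerProductSpace

theorem eq_zero_or_map_zero_eq_one {A M₀ : Type*} [AddZeroClass A] [MonoidWithZero M₀]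
    [IsLeftCancelMulZero M₀] {e : A → M₀} (he : ∀ a b, e (a + b) = e a * e b) : (∀ a, e a = 0) ∨ e 0 = 1 := by
  have h00 : e 0 * e 0 = e 0 := by rw [← he, add_zero]
  rcases mul_right_eq_self₀.mp h00 with h | h
  · exact Or.inr h
  · exact Or.inl fun a ↦ by rw [← add_zero a, he, h, mul_zero]

def AddChar.dotProductRight {R ι M : Type*} [NonUnitalNonAssocSemiring R] [Fintype ι] [CommMonoid M]
    (ψ : AddChar R M) (z : ι → R) : AddChar (ι → R) M where
  toFun c := ψ (c ⬝ᵥ z)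
  map_zero_eq_one' := by simp
  map_add_eq_mul' a b := by simp [add_dotProduct, AddChar.map_add_eq_mul]

theorem IsStarProjection.finset_sum {R ι : Type*} [NonUnitalNonAssocSemiring R] [StarRing R]
    {p : ι → R} {s : Finset ι} (hp : ∀ i ∈ s, IsStarProjection (p i))
    (horth : (s : Set ι).Pairwise fun i j ↦ p i * p j = 0) :
    IsStarProjection (∑ i ∈ s, p i) := by
  classical
  induction s using Finset.induction_on with
  | empty => simp [IsStarProjection.zero]
  | insert a s ha ih =>
    rw [sum_insert ha]
    refine (hp a (mem_insert_self a s)).add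
      (ih (fun i hi ↦ hp i (mem_insert_of_mem hi)) (horth.mono (by simp))) ?_
    rw [mul_sum]
    refine sum_eq_zero fun i hi ↦ horth (by simp) (by simp [hi]) ?_
    rintro rfl
    exact ha hi

section InnerProductSpace

variable {𝕜 H : Type*} [RCLike 𝕜] [NormedAddCommGroup H] [InnerProductSpace 𝕜 H]

theorem norm_sum_smul_sq_le_card_mul {ι : Type*} (s : Finset ι) (a : ι → 𝕜) (u : ι → H)
    (ha : ∀ i ∈ s, ‖a i‖ = 1) :
    ‖∑ i ∈ s, a i • u i‖ ^ 2 ≤ #s * ∑ i ∈ s, ‖u i‖ ^ 2 := by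
  calc ‖∑ i ∈ s, a i • u i‖ ^ 2 ≤ (∑ i ∈ s, ‖u i‖) ^ 2 := by
        gcongr
        refine (norm_sum_le _ _).trans_eq (sum_congr rfl fun i hi ↦ ?_)
        rw [norm_smul, ha i hi, one_mul]
    _ ≤ #s * ∑ i ∈ s, ‖u i‖ ^ 2 := sq_sum_le_card_mul_sum_sq

theorem AddChar.sum_conj_mul_eq_ite {G : Type*} [AddCommGroup G] [Fintype G]
    (χ χ' : AddChar G 𝕜) [Decidable (χ = χ')] :
    ∑ g, conj (χ g) * χ' g = if χ = χ' then (Fintype.card G : 𝕜) else 0 := by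
  have h := wInner_cWeight_eq_boole χ χ'
  rw [RCLike.wInner_cWeight_eq_expect, Fintype.expect_eq_sum_div_card] at h
  simp only [RCLike.inner_apply'] at h
  rw [div_eq_iff (by simp)] at h
  rw [h]
  split_ifs <;> simp

theorem AddChar.sum_norm_sq_sum_smul {G : Type*} [AddCommGroup G] [Fintype G]
    (s : Finset (AddChar G 𝕜)) (v : AddChar G 𝕜 → H) :
    ∑ g, ‖∑ χ ∈ s, χ g • v χ‖ ^ 2 = Fintype.card G * ∑ χ ∈ s, ‖v χ‖ ^ 2 := by
  classical
  apply RCLike.ofReal_injective (K := 𝕜)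
  push_cast
  rw [mul_sum]
  simp only [← inner_self_eq_norm_sq_to_K, sum_inner, inner_sum, inner_smul_left,
    inner_smul_right, mul_sum]
  calc ∑ g, ∑ χ' ∈ s, ∑ χ ∈ s, χ' g * (conj (χ g) * ⟪v χ, v χ'⟫_𝕜)
      = ∑ χ' ∈ s, ∑ χ ∈ s, (∑ g, conj (χ g) * χ' g) * ⟪v χ, v χ'⟫_𝕜 := by
        rw [sum_comm]
        refine sum_congr rfl fun χ' _ ↦ ?_
        rw [sum_comm]
        simp only [sum_mul, mul_left_comm (χ' _), mul_assoc]
    _ = ∑ χ ∈ s, Fintype.card G * ⟪v χ, v χ⟫_𝕜 := by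
        simp [sum_conj_mul_eq_ite, ite_mul]

variable [CompleteSpace H]

theorem IsStarProjection.re_inner_self_apply {p : H →L[𝕜] H} (hp : IsStarProjection p) (v : H) :
    RCLike.re ⟪v, p v⟫_𝕜 = ‖p v‖ ^ 2 := by
  have : ⟪v, p v⟫_𝕜 = ⟪p v, p v⟫_𝕜 := by
    conv_lhs => rw [← hp.isIdempotentElem.eq, mul_apply_eq_comp,
      ← ContinuousLinearMap.adjoint_inner_left, ← ContinuousLinearMap.star_eq_adjoint,
      hp.isSelfAdjoint.star_eq]
  rw [this, inner_self_eq_norm_sq]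

theorem IsStarProjection.norm_apply_le {p : H →L[𝕜] H} (hp : IsStarProjection p) (v : H) :
    ‖p v‖ ≤ ‖v‖ :=
  (p.le_opNorm v).trans (by simpa using mul_le_mul_of_nonneg_right (hp.norm_le p) (norm_nonneg v))

theorem sum_norm_sq_apply_le_norm_sq {ι : Type*} [Fintype ι] {E : ι → H →L[𝕜] H}
    (hE : ∀ i, IsStarProjection (E i)) (horth : Pairwise fun i j ↦ E i * E j = 0) (v : H) :
    ∑ i, ‖E i v‖ ^ 2 ≤ ‖v‖ ^ 2 := by
  have hP : IsStarProjection (∑ i, E i) :=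
    .finset_sum (fun i _ ↦ hE i) fun i _ j _ hij ↦ horth hij
  calc ∑ i, ‖E i v‖ ^ 2 = ‖(∑ i, E i) v‖ ^ 2 := by
        rw [← hP.re_inner_self_apply, _root_.sum_apply, inner_sum, map_sum]
        exact sum_congr rfl fun i _ ↦ ((hE i).re_inner_self_apply v).symm
    _ ≤ ‖v‖ ^ 2 := by gcongr; exact hP.norm_apply_le v

theorem sum_norm_sq_apply_sum_addChar_smul_le {G X : Type*} [AddCommGroup G] [Fintype G]
    [Fintype X] (Θ : X → AddChar G 𝕜) (φ : X → H) (hφ : ∀ g, ‖∑ x, Θ x g • φ x‖ ≤ 1)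
    {E : G → H →L[𝕜] H} (hE : ∀ g, IsStarProjection (E g))
    (horth : Pairwise fun g g' ↦ E g * E g' = 0) :
    ∑ g, ‖E g (∑ x, Θ x g • φ x)‖ ^ 2 ≤ (Set.range Θ).ncard := by
  classical
  set R := univ.image Θ
  have hR : (Set.range Θ).ncard = #R := by
    rw [← Set.ncard_coe_finset, coe_image, coe_univ, Set.image_univ]
  set v : AddChar G 𝕜 → H := fun χ ↦ ∑ x with Θ x = χ, φ x
  have hdecomp : ∀ g, ∑ x, Θ x g • φ x = ∑ χ ∈ R, χ g • v χ := fun g ↦ by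
    simp only [v, smul_sum]
    rw [← sum_fiberwise_of_maps_to (fun x _ ↦ mem_image_of_mem Θ (mem_univ x))]
    exact sum_congr rfl fun χ _ ↦ sum_congr rfl fun x hx ↦ by rw [(mem_filter.mp hx).2]
  have hv : ∑ χ ∈ R, ‖v χ‖ ^ 2 ≤ 1 := by
    have hG : (0 : ℝ) < Fintype.card G := by exact_mod_cast Fintype.card_pos
    refine le_of_mul_le_mul_left ?_ hG
    calc Fintype.card G * ∑ χ ∈ R, ‖v χ‖ ^ 2 = ∑ g, ‖∑ x, Θ x g • φ x‖ ^ 2 := by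
          simp only [hdecomp, AddChar.sum_norm_sq_sum_smul]
      _ ≤ ∑ _g : G, (1 : ℝ) := sum_le_sum fun g _ ↦ pow_le_one₀ (norm_nonneg _) (hφ g)
      _ = Fintype.card G * 1 := by simp
  calc ∑ g, ‖E g (∑ x, Θ x g • φ x)‖ ^ 2 = ∑ g, ‖∑ χ ∈ R, χ g • E g (v χ)‖ ^ 2 := by
        simp only [hdecomp, map_sum, map_smul]
    _ ≤ ∑ g, #R * ∑ χ ∈ R, ‖E g (v χ)‖ ^ 2 := sum_le_sum fun g _ ↦
        norm_sum_smul_sq_le_card_mul _ _ _ fun χ _ ↦ χ.norm_apply g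
    _ = #R * ∑ χ ∈ R, ∑ g, ‖E g (v χ)‖ ^ 2 := by rw [← mul_sum, sum_comm]
    _ ≤ #R * ∑ χ ∈ R, ‖v χ‖ ^ 2 := by
        gcongr with χ
        exact sum_norm_sq_apply_le_norm_sq hE horth (v χ)
    _ ≤ (Set.range Θ).ncard := by rw [hR]; exact mul_le_of_le_one_right (by positivity) hv

end InnerProductSpace

/-- Let `q` be a prime power (`F` the finite field with `q` elements),
`k, d` natural numbers, `e : F → ℂ` an additive character, `H` a finite-dimensional
complex inner product space, and `φ : F^k × F^k → H`.  For `c ∈ F^{d+1}` define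
`ψ_c := Σ_{(x,y)} e(c · Z(x,y)) φ(x,y)` and assume `‖ψ_c‖ ≤ 1` for all `c`.  Let
`E_c` be orthogonal projections with pairwise orthogonal ranges.  Then
`Σ_c Re⟨ψ_c, E_c ψ_c⟩ ≤ |R_k|`. -/
theorem stmt_9 (F : Type*) [Field F] [Fintype F] (k d : ℕ)
    (e : F → ℂ) (he : ∀ a b, e (a + b) = e a * e b)
    (H : Type*) [NormedAddCommGroup H] [InnerProductSpace ℂ H]
    [FiniteDimensional ℂ H]
    (φ : (Fin k → F) × (Fin k → F) → H)
    (ψ : (Fin (d + 1) → F) → H)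
    (hψdef : ∀ c, ψ c = ∑ xy : (Fin k → F) × (Fin k → F),
        e (∑ j : Fin (d + 1), c j * (∑ i, xy.2 i * xy.1 i ^ (j : ℕ))) • φ xy)
    (hψ : ∀ c, ‖ψ c‖ ≤ 1)
    (E : (Fin (d + 1) → F) → H →L[ℂ] H)
    (hidem : ∀ c, (E c).comp (E c) = E c)
    (hsa : ∀ c, IsSelfAdjoint (E c))
    (horth : ∀ c c', c ≠ c' → (E c).comp (E c') = 0) :
    ∑ c : Fin (d + 1) → F, (inner ℂ (ψ c) (E c (ψ c)) : ℂ).re ≤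
      ((Set.range (fun xy : (Fin k → F) × (Fin k → F) =>
        fun j : Fin (d + 1) => ∑ i, xy.2 i * xy.1 i ^ (j : ℕ))).ncard : ℝ) := by
  set Z := fun xy : (Fin k → F) × (Fin k → F) =>
    fun j : Fin (d + 1) => ∑ i, xy.2 i * xy.1 i ^ (j : ℕ)
  rcases eq_zero_or_map_zero_eq_one he with he0 | he0
  · simp [hψdef, he0]
  let χ : AddChar F ℂ := ⟨e, he0, he⟩
  have hE : ∀ c, IsStarProjection (E c) := fun c ↦ ⟨hidem c, hsa c⟩
  calc ∑ c, (inner ℂ (ψ c) (E c (ψ c)) : ℂ).re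
      = ∑ c, ‖E c (∑ xy, χ.dotProductRight (Z xy) c • φ xy)‖ ^ 2 := by
        refine sum_congr rfl fun c _ ↦ ?_
        rw [← (hE c).re_inner_self_apply, hψdef]
        rfl
    _ ≤ (Set.range fun xy ↦ χ.dotProductRight (Z xy)).ncard :=
        sum_norm_sq_apply_sum_addChar_smul_le _ φ (fun c ↦ hψdef c ▸ hψ c) hE
          fun c c' hcc' ↦ horth c c' hcc'
    _ ≤ (Set.range Z).ncard := by
        rw [Set.range_comp']
        exact_mod_cast Set.ncard_image_le (Set.toFinite _)
end

section
/- Let F be a field and let k ≤ d be natural numbers. For any x, y ∈ F^k, if Σ_{i=1}^k y_i x_i^j = 0 for every j ∈ {0,1,…,d-1}, then also Σ_{i=1}^k y_i x_i^d = 0. Equivalently, for k ≤ d no vector of the form (0,…,0,z_d) with z_d ≠ 0 lies in the range of Z : F^k × F^k → F^{d+1}. -/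
/-- Let `F` be a field and `k ≤ d` natural numbers.  For any
`x, y ∈ F^k`, if `Σ_{i=1}^k y_i x_i^j = 0` for every `j ∈ {0,…,d-1}`, then also
`Σ_{i=1}^k y_i x_i^d = 0`. -/
theorem stmt_10 (F : Type*) [Field F] (k d : ℕ) (hkd : k ≤ d)
    (x y : Fin k → F)
    (h : ∀ j : ℕ, j < d → ∑ i, y i * x i ^ j = 0) :
    ∑ i, y i * x i ^ d = 0 := by
  classical
  set S : Finset F := Finset.univ.image x with hS
  set c : F → F := fun a => ∑ i ∈ Finset.univ.filter (fun i => x i = a), y i with hc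
  have hfib : ∀ j : ℕ, ∑ i, y i * x i ^ j = ∑ a ∈ S, c a * a ^ j := by
    intro j
    rw [← Finset.sum_fiberwise_of_maps_to
      (fun i _ => Finset.mem_image_of_mem x (Finset.mem_univ i))
      (fun i => y i * x i ^ j)]
    refine Finset.sum_congr rfl fun a _ => ?_
    rw [hc, Finset.sum_mul]
    refine Finset.sum_congr rfl fun i hi => ?_
    rw [(Finset.mem_filter.mp hi).2]
  have hzero : ∀ j : ℕ, j < d → ∑ a ∈ S, c a * a ^ j = 0 := fun j hj =>
    (hfib j).symm.trans (h j hj)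
  have hcard : S.card ≤ k := by
    simpa using Finset.card_image_le (s := (Finset.univ : Finset (Fin k))) (f := x)
  have hczero : ∀ a ∈ S, c a = 0 := by
    intro a ha
    set P : Polynomial F := ∏ b ∈ S.erase a, (Polynomial.X - Polynomial.C b) with hP
    have hdeg : P.natDegree < d := by
      have : P.natDegree = (S.erase a).card := by
        rw [hP, Polynomial.natDegree_prod]
        · simp
        · intro b _; exact Polynomial.X_sub_C_ne_zero b
      rw [this, Finset.card_erase_of_mem ha]
      have h1 : 1 ≤ S.card := Finset.card_pos.mpr ⟨a, ha⟩
      omega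
    have hL : ∑ a' ∈ S, c a' * P.eval a' = 0 := by
      have : ∀ a' : F, P.eval a' = ∑ j ∈ P.support, P.coeff j * a' ^ j := by
        intro a'
        rw [Polynomial.eval_eq_sum]
        rfl
      calc ∑ a' ∈ S, c a' * P.eval a'
          = ∑ a' ∈ S, ∑ j ∈ P.support, c a' * (P.coeff j * a' ^ j) := by
            refine Finset.sum_congr rfl fun a' _ => ?_
            rw [this a', Finset.mul_sum]
        _ = ∑ j ∈ P.support, P.coeff j * ∑ a' ∈ S, c a' * a' ^ j := by
            rw [Finset.sum_comm]
            refine Finset.sum_congr rfl fun j _ => ?_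
            rw [Finset.mul_sum]
            refine Finset.sum_congr rfl fun a' _ => ?_
            ring
        _ = 0 := by
            refine Finset.sum_eq_zero fun j hj => ?_
            have : j < d := lt_of_le_of_lt (Polynomial.le_natDegree_of_mem_supp j hj) hdeg
            rw [hzero j this, mul_zero]
    have hsingle : ∑ a' ∈ S, c a' * P.eval a' = c a * P.eval a := by
      refine Finset.sum_eq_single a (fun b hb hba => ?_) (fun hna => absurd ha hna)
      have : P.eval b = 0 := by
        rw [hP, Polynomial.eval_prod]
        refine Finset.prod_eq_zero (Finset.mem_erase.mpr ⟨hba, hb⟩) ?_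
        simp
      rw [this, mul_zero]
    have hev : P.eval a ≠ 0 := by
      rw [hP, Polynomial.eval_prod]
      refine Finset.prod_ne_zero_iff.mpr fun b hb => ?_
      have : b ≠ a := (Finset.mem_erase.mp hb).1
      simp [sub_eq_zero]
      exact fun h' => this h'.symm
    have : c a * P.eval a = 0 := by rw [← hsingle, hL]
    exact (mul_eq_zero.mp this).resolve_right hev
  rw [hfib d]
  exact Finset.sum_eq_zero fun a ha => by rw [hczero a ha, zero_mul]
end

section
/- Let F be a field, let k ≥ 1, and let x, y ∈ F^k with x_1,…,x_k pairwise distinct and y_1,…,y_k all nonzero. Define z_j := Σ_{i=1}^k y_i x_i^j, and let H be the k×k Hankel matrix with entries H_{a,b} = z_{a+b} for a, b ∈ {0,…,k-1}. Then H is invertible (its determinant is nonzero). -/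
/-- Let `F` be a field, `k ≥ 1`, and `x, y ∈ F^k` with the `x_i`
pairwise distinct and the `y_i` all nonzero.  Define `z_j := Σ_{i=1}^k y_i x_i^j`
and let `H` be the `k×k` Hankel matrix `H_{a,b} = z_{a+b}`.  Then `H` is invertible
(its determinant is nonzero). -/
theorem stmt_14 (F : Type*) [Field F] (k : ℕ) (hk : 1 ≤ k) (x y : Fin k → F)
    (hx : Function.Injective x) (hy : ∀ i, y i ≠ 0)
    (H : Matrix (Fin k) (Fin k) F)
    (hH : ∀ a b : Fin k, H a b = ∑ i, y i * x i ^ ((a : ℕ) + (b : ℕ))) :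
    H.det ≠ 0 := by
  have hfact : H = (Matrix.vandermonde x).transpose * (Matrix.diagonal y * Matrix.vandermonde x) := by
    ext a b
    rw [hH]
    simp only [Matrix.mul_apply, Matrix.transpose_apply, Matrix.vandermonde,
      Matrix.diagonal_apply, Matrix.of_apply, pow_add]
    apply Finset.sum_congr rfl
    intro i _
    rw [Finset.sum_eq_single i]
    · simp; ring
    · intro j _ hji; simp [Ne.symm hji]
    · simp
  rw [hfact, Matrix.det_mul, Matrix.det_mul, Matrix.det_transpose, Matrix.det_diagonal,
    Matrix.det_vandermonde]
  have hv : ∏ i : Fin k, ∏ j ∈ Finset.Ioi i, (x j - x i) ≠ 0 := by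
    apply Finset.prod_ne_zero_iff.2
    intro i _
    apply Finset.prod_ne_zero_iff.2
    intro j hj
    have : i ≠ j := (Finset.mem_Ioi.1 hj).ne
    exact sub_ne_zero.2 fun h => this ((hx h).symm)
  exact mul_ne_zero hv (mul_ne_zero (Finset.prod_ne_zero_iff.2 fun i _ => hy i) hv)
end

section
/- Let F be a field, let k ≥ 1, and let x, y ∈ F^k with x_1,…,x_k pairwise distinct and y_1,…,y_k all nonzero. Define z_j := Σ_{i=1}^k y_i x_i^j, and suppose a ∈ F^k satisfies Σ_{j=0}^{k-1} z_{i+j} a_j = z_{k+i} for every i ∈ {0,…,k-1}. Then an element t ∈ F satisfies t^k = Σ_{j=0}^{k-1} a_j t^j if and only if t ∈ {x_1,…,x_k}; i.e., the roots of the characteristic polynomial χ(X) = X^k - Σ_{j=0}^{k-1} a_j X^j are exactly x_1,…,x_k. -/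
open Polynomial

/-- Let `F` be a field, `k ≥ 1`, and `x, y ∈ F^k` with the `x_i`
pairwise distinct and the `y_i` all nonzero.  Define `z_j := Σ_{i=1}^k y_i x_i^j`,
and suppose `a ∈ F^k` satisfies `Σ_{j=0}^{k-1} z_{i+j} a_j = z_{k+i}` for every
`i ∈ {0,…,k-1}`.  Then `t ∈ F` satisfies `t^k = Σ_{j=0}^{k-1} a_j t^j` if and only
if `t ∈ {x_1,…,x_k}`. -/
theorem stmt_15 (F : Type*) [Field F] (k : ℕ) (hk : 1 ≤ k) (x y : Fin k → F)
    (hx : Function.Injective x) (hy : ∀ i, y i ≠ 0)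
    (z : ℕ → F) (hz : ∀ j, z j = ∑ i, y i * x i ^ j)
    (a : Fin k → F)
    (ha : ∀ i : Fin k, ∑ j : Fin k, z ((i : ℕ) + (j : ℕ)) * a j = z (k + (i : ℕ))) :
    ∀ t : F, (t ^ k = ∑ j : Fin k, a j * t ^ (j : ℕ)) ↔ ∃ i, t = x i := by
  -- Step 1: each x m is a root of the characteristic polynomial
  have hroot : ∀ m : Fin k, x m ^ k = ∑ j : Fin k, a j * x m ^ (j : ℕ) := by
    set c : Fin k → F := fun m => y m * (x m ^ k - ∑ j : Fin k, a j * x m ^ (j : ℕ)) with hc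
    have hczero : c = 0 := by
      apply Matrix.eq_zero_of_forall_pow_sum_mul_pow_eq_zero hx
      intro i
      calc ∑ m : Fin k, c m * x m ^ (i : ℕ)
          = ∑ m : Fin k, (y m * x m ^ (k + (i : ℕ)) -
              ∑ j : Fin k, y m * x m ^ ((i : ℕ) + (j : ℕ)) * a j) := by
            refine Finset.sum_congr rfl fun m _ => ?_
            simp only [hc, pow_add, mul_sub, sub_mul, Finset.mul_sum, Finset.sum_mul]
            congr 1
            · ring
            · exact Finset.sum_congr rfl fun j _ => by ring
        _ = z (k + (i : ℕ)) - ∑ j : Fin k, z ((i : ℕ) + (j : ℕ)) * a j := by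
            rw [Finset.sum_sub_distrib, Finset.sum_comm]
            simp only [hz, Finset.sum_mul]
        _ = 0 := by rw [ha i, sub_self]
    intro m
    have h := congrFun hczero m
    simp only [hc, Pi.zero_apply, mul_eq_zero, sub_eq_zero] at h
    exact h.resolve_left (hy m)
  -- Step 2: the characteristic polynomial equals ∏ (X - x m)
  set s : F[X] := ∑ j : Fin k, C (a j) * X ^ (j : ℕ) with hs
  set q : F[X] := X ^ k - s with hq
  set p : F[X] := ∏ m : Fin k, (X - C (x m)) with hp
  have hsdeg : s.degree < (k : ℕ) := by
    apply lt_of_le_of_lt (degree_sum_le _ _)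
    rw [Finset.sup_lt_iff (by exact_mod_cast WithBot.bot_lt_coe k)]
    intro j _
    exact lt_of_le_of_lt (degree_C_mul_X_pow_le _ _) (by exact_mod_cast j.isLt)
  have hqm : q.Monic := monic_X_pow_sub hsdeg
  have hqdeg : q.degree = (k : ℕ) := by
    rw [hq, degree_sub_eq_left_of_degree_lt (by rwa [degree_X_pow]), degree_X_pow]
  have hpm : p.Monic := monic_prod_of_monic _ _ fun m _ => monic_X_sub_C (x m)
  have hpdeg : p.degree = (k : ℕ) := by
    rw [hp, degree_prod]
    simp [degree_X_sub_C]
  have hqeval : ∀ m : Fin k, q.eval (x m) = 0 := by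
    intro m
    simp only [hq, hs, eval_sub, eval_pow, eval_X, eval_finset_sum, eval_mul, eval_C]
    rw [hroot m]
    ring
  have hpeval : ∀ m : Fin k, p.eval (x m) = 0 := by
    intro m
    rw [hp, eval_prod]
    apply Finset.prod_eq_zero (Finset.mem_univ m)
    simp
  have hqp : q = p := by
    by_contra hne
    have hd0 : q - p ≠ 0 := sub_ne_zero.mpr hne
    have hdlt : (q - p).degree < (k : ℕ) := by
      apply lt_of_lt_of_le (degree_sub_lt (hqdeg.trans hpdeg.symm)
        (hqm.ne_zero) (by rw [hqm.leadingCoeff, hpm.leadingCoeff])) hqdeg.le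
    have : q - p = 0 := by
      apply Polynomial.eq_zero_of_natDegree_lt_card_of_eval_eq_zero _ hx
      · intro m; simp [hqeval m, hpeval m]
      · rw [Fintype.card_fin]
        exact natDegree_lt_iff_degree_lt hd0 |>.mpr hdlt
    exact hd0 this
  -- Step 3: conclude
  intro t
  have hev : t ^ k - ∑ j : Fin k, a j * t ^ (j : ℕ) = ∏ m : Fin k, (t - x m) := by
    have := congrArg (Polynomial.eval t) hqp
    simpa [hq, hs, hp, eval_finset_sum, eval_prod] using this
  constructor
  · intro h
    have : (∏ m : Fin k, (t - x m)) = 0 := by rw [← hev, h]; ring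
    obtain ⟨m, _, hm⟩ := Finset.prod_eq_zero_iff.mp this
    exact ⟨m, sub_eq_zero.mp hm⟩
  · rintro ⟨m, rfl⟩
    have : (∏ i : Fin k, (x m - x i)) = 0 :=
      Finset.prod_eq_zero (Finset.mem_univ m) (by simp)
    exact sub_eq_zero.mp (hev.trans this)
end

section
/- Let q be a prime power and let k ≥ 1, d be natural numbers. Then the number of quadruples (u,v,x,y) with u, x ∈ F_q^k having pairwise-distinct entries, v, y ∈ F_q^k having all entries nonzero, and Z(u,v) = Z(x,y), is at most N_g²/q^{d+1} + (q(d+1))^{2k} (as an inequality of real numbers), where N_g := (∏_{i=0}^{k-1}(q-i)) · (q-1)^k. Equivalently, Σ_{z ∈ F_q^{d+1}} |Z^{-1}(z)^good|² ≤ N_g²/q^{d+1} + (q(d+1))^{2k}. -/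
/-!
Fix a primitive additive character `ψ` of `F` and put `S(l) = ∑ ψ (l ⬝ᵥ Z(x, y))`, the sum running
over good pairs. Orthogonality of characters gives `∑_l |S(l)|² = q^(d+1) · #{Z(u, v) = Z(x, y)}`,
and `S(0) = N_g`. For `l ≠ 0` we have `l ⬝ᵥ Z(x, y) = ∑ i, y i * P_l (x i)` with `P_l` a nonzero
polynomial of degree at most `d`, so the sum over `y` factors as `∏ i, ∑_{c ≠ 0} ψ (c * P_l (x i))`.
Each factor has modulus `q - 1` at the at most `d` roots of `P_l` and modulus `1` elsewhere, so
after dropping the injectivity of `x` we get `|S(l)| ≤ (q(d+1))^k`.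
-/

open Finset Polynomial

namespace AddChar

theorem map_sum_eq_prod {ι A M : Type*} [AddCommMonoid A] [CommMonoid M] (ψ : AddChar A M)
    (s : Finset ι) (f : ι → A) : ψ (∑ i ∈ s, f i) = ∏ i ∈ s, ψ (f i) := by
  induction s using Finset.cons_induction with
  | empty => simp
  | cons a s ha ih => rw [sum_cons, prod_cons, map_add_eq_mul, ih]

variable {R : Type*} [CommRing R] [Fintype R] [DecidableEq R] {ψ : AddChar R ℂ}

theorem sum_compl_zero_apply_mul (hψ : ψ.IsPrimitive) (b : R) :
    ∑ c ∈ {0}ᶜ, ψ (c * b) = (if b = 0 then (Fintype.card R : ℂ) else 0) - 1 := by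
  have h := sum_mulShift b hψ
  push_cast at h
  rw [← h, Fintype.sum_eq_add_sum_compl (0 : R), zero_mul, map_zero_eq_one]
  ring

theorem sum_apply_dotProduct (hψ : ψ.IsPrimitive) {ι : Type*} [Fintype ι] [DecidableEq ι]
    (w : ι → R) :
    ∑ l : ι → R, ψ (l ⬝ᵥ w) = if w = 0 then (Fintype.card R : ℂ) ^ Fintype.card ι else 0 := by
  simp_rw [dotProduct, map_sum_eq_prod]
  rw [← Fintype.prod_sum (fun j c => ψ (c * w j))]
  simp_rw [sum_mulShift _ hψ, Nat.cast_ite, Nat.cast_zero]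
  split_ifs with hw
  · simp [hw]
  · obtain ⟨j, hj⟩ := Function.ne_iff.mp hw
    exact prod_eq_zero (mem_univ j) (if_neg hj)

theorem sum_norm_sq_sum_apply_dotProduct (hψ : ψ.IsPrimitive) {ι α : Type*} [Fintype ι]
    [DecidableEq ι] (s : Finset α) (Z : α → ι → R) :
    ∑ l : ι → R, ‖∑ a ∈ s, ψ (l ⬝ᵥ Z a)‖ ^ 2 =
      (Fintype.card R : ℝ) ^ Fintype.card ι * #{p ∈ s ×ˢ s | Z p.1 = Z p.2} := by
  have expand : ∀ l : ι → R, (‖∑ a ∈ s, ψ (l ⬝ᵥ Z a)‖ ^ 2 : ℂ) =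
      ∑ p ∈ s ×ˢ s, ψ (l ⬝ᵥ (Z p.1 - Z p.2)) := by
    intro l
    rw [← Complex.mul_conj', map_sum, sum_mul_sum, sum_product]
    refine sum_congr rfl fun a _ => sum_congr rfl fun b _ => ?_
    rw [← map_neg_eq_conj, ← map_add_eq_mul, dotProduct_sub, sub_eq_add_neg]
  apply Complex.ofReal_injective
  push_cast
  simp_rw [expand]
  rw [sum_comm, card_filter, Nat.cast_sum, mul_sum]
  refine sum_congr rfl fun p _ => ?_
  simp only [sum_apply_dotProduct hψ, sub_eq_zero]
  split_ifs <;> simp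

end AddChar

namespace Polynomial

variable {R : Type*} [CommRing R] [DecidableEq R]

theorem eval_ofFn {n : ℕ} (v : Fin n → R) (a : R) :
    (ofFn n v).eval a = ∑ j, v j * a ^ (j : ℕ) := by
  simp [ofFn_eq_sum_monomial, eval_finsetSum]

theorem ofFn_ne_zero {n : ℕ} {v : Fin n → R} (hv : v ≠ 0) : ofFn n v ≠ 0 :=
  (map_ne_zero_iff _ (injective_ofFn n)).mpr hv

theorem card_filter_eval_eq_zero_le [IsDomain R] [Fintype R] {p : R[X]} (hp : p ≠ 0) :
    #{a | p.eval a = 0} ≤ p.natDegree :=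
  card_le_degree_of_subset_roots fun a ha => by simpa [mem_roots hp] using ha

end Polynomial

/-- The map `Z` of the paper, evaluated at the pair `p = (x, y)`. -/
def moments {ι R : Type*} [Fintype ι] [CommSemiring R] (d : ℕ) (p : (ι → R) × (ι → R)) :
    Fin (d + 1) → R :=
  fun j => ∑ i, p.2 i * p.1 i ^ (j : ℕ)

theorem dotProduct_moments {ι R : Type*} [Fintype ι] [CommRing R] [DecidableEq R] {d : ℕ}
    (l : Fin (d + 1) → R) (p : (ι → R) × (ι → R)) :
    l ⬝ᵥ moments d p = ∑ i, p.2 i * (ofFn (d + 1) l).eval (p.1 i) := by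
  simp only [dotProduct, moments, eval_ofFn, mul_sum]
  rw [sum_comm]
  exact sum_congr rfl fun i _ => sum_congr rfl fun j _ => by ring

section GoodPairs

variable {ι F : Type*} [Fintype ι] [DecidableEq ι] [Field F] [Fintype F] [DecidableEq F]

variable (ι F) in
def goodPairs : Finset ((ι → F) × (ι → F)) :=
  ({x | Function.Injective x} : Finset (ι → F)) ×ˢ Fintype.piFinset fun _ => ({0}ᶜ : Finset F)

theorem mem_goodPairs {p : (ι → F) × (ι → F)} :
    p ∈ goodPairs ι F ↔ Function.Injective p.1 ∧ ∀ i, p.2 i ≠ 0 := by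
  simp [goodPairs]

theorem card_goodPairs :
    #(goodPairs ι F) =
      (Fintype.card F).descFactorial (Fintype.card ι) * (Fintype.card F - 1) ^ Fintype.card ι := by
  rw [goodPairs, card_product, Fintype.card_piFinset, prod_const, card_compl, card_singleton,
    card_univ, ← Fintype.card_embedding_eq, ← Fintype.card_subtype,
    Fintype.card_congr (Equiv.subtypeInjectiveEquivEmbedding ι F)]

theorem sum_goodPairs_apply_sum_mul_eq_sum_prod (ψ : AddChar F ℂ) (P : F → F) :
    ∑ p ∈ goodPairs ι F, ψ (∑ i, p.2 i * P (p.1 i)) =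
      ∑ x : ι → F with Function.Injective x, ∏ i, ∑ c ∈ {0}ᶜ, ψ (c * P (x i)) := by
  rw [goodPairs, sum_product]
  refine sum_congr rfl fun x _ => ?_
  simp_rw [AddChar.map_sum_eq_prod]
  exact sum_prod_piFinset _ fun i c => ψ (c * P (x i))

variable {ψ : AddChar F ℂ}

theorem sum_norm_sum_compl_zero_apply_mul_eval_le (hψ : ψ.IsPrimitive) {P : F[X]} (hP : P ≠ 0) :
    ∑ a, ‖∑ c ∈ {0}ᶜ, ψ (c * P.eval a)‖ ≤ Fintype.card F * (P.natDegree + 1) := by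
  have hterm : ∀ b : F,
      ‖∑ c ∈ {0}ᶜ, ψ (c * b)‖ ≤ (if b = 0 then (Fintype.card F : ℝ) else 0) + 1 := by
    intro b
    rw [AddChar.sum_compl_zero_apply_mul hψ]
    refine (norm_sub_le _ _).trans ?_
    split_ifs <;> simp
  have hroots : (#{a | P.eval a = 0} : ℝ) ≤ P.natDegree :=
    mod_cast card_filter_eval_eq_zero_le hP
  calc ∑ a, ‖∑ c ∈ {0}ᶜ, ψ (c * P.eval a)‖
      ≤ ∑ a, ((if P.eval a = 0 then (Fintype.card F : ℝ) else 0) + 1) :=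
        sum_le_sum fun a _ => hterm _
    _ = #{a | P.eval a = 0} * Fintype.card F + Fintype.card F := by
        rw [sum_add_distrib, ← sum_filter]
        simp
    _ ≤ Fintype.card F * (P.natDegree + 1) := by nlinarith [(Fintype.card F).cast_nonneg (α := ℝ)]

theorem norm_sum_goodPairs_le (hψ : ψ.IsPrimitive) {P : F[X]} (hP : P ≠ 0) :
    ‖∑ p ∈ goodPairs ι F, ψ (∑ i, p.2 i * P.eval (p.1 i))‖ ≤
      (Fintype.card F * (P.natDegree + 1)) ^ Fintype.card ι := by
  rw [sum_goodPairs_apply_sum_mul_eq_sum_prod ψ (P.eval ·)]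
  calc _ ≤ ∑ x : ι → F with Function.Injective x,
          ∏ i, ‖∑ c ∈ {0}ᶜ, ψ (c * P.eval (x i))‖ :=
        (norm_sum_le _ _).trans_eq (sum_congr rfl fun _ _ => norm_prod _ _)
    _ ≤ ∑ x : ι → F, ∏ i, ‖∑ c ∈ {0}ᶜ, ψ (c * P.eval (x i))‖ :=
        sum_le_sum_of_subset_of_nonneg (filter_subset _ _) fun _ _ _ => by positivity
    _ = (∑ a, ‖∑ c ∈ {0}ᶜ, ψ (c * P.eval a)‖) ^ Fintype.card ι := by
        rw [← Fintype.prod_sum (fun (_ : ι) a => ‖∑ c ∈ {0}ᶜ, ψ (c * P.eval a)‖), prod_const,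
          card_univ]
    _ ≤ _ := by gcongr; exact sum_norm_sum_compl_zero_apply_mul_eval_le hψ hP

theorem card_filter_moments_eq_le (d : ℕ) :
    (Fintype.card F : ℝ) ^ (d + 1) *
        #{t ∈ goodPairs ι F ×ˢ goodPairs ι F | moments d t.1 = moments d t.2} ≤
      (#(goodPairs ι F) : ℝ) ^ 2 +
        (Fintype.card F : ℝ) ^ (d + 1) * (Fintype.card F * (d + 1)) ^ (2 * Fintype.card ι) := by
  set ψ := AddChar.FiniteField.primitiveChar_to_Complex F
  have hψ : ψ.IsPrimitive := AddChar.FiniteField.primitiveChar_to_Complex_isPrimitive F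
  set B : ℝ := (Fintype.card F * (d + 1)) ^ (2 * Fintype.card ι)
  set S : (Fin (d + 1) → F) → ℝ := fun l => ‖∑ p ∈ goodPairs ι F, ψ (l ⬝ᵥ moments d p)‖ ^ 2
  have hS0 : S 0 = #(goodPairs ι F) ^ 2 := by simp [S]
  have hS : ∀ l ≠ 0, S l ≤ B := by
    intro l hl
    have hdeg : (ofFn (d + 1) l).natDegree ≤ d :=
      Nat.lt_succ_iff.mp (ofFn_natDegree_lt (Nat.succ_pos d) l)
    simp only [S, B, dotProduct_moments, pow_mul']
    gcongr
    refine (norm_sum_goodPairs_le hψ (ofFn_ne_zero hl)).trans ?_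
    gcongr
  have parseval := AddChar.sum_norm_sq_sum_apply_dotProduct hψ (goodPairs ι F) (moments d)
  rw [Fintype.card_fin] at parseval
  rw [← parseval]
  change ∑ l, S l ≤ _
  rw [Fintype.sum_eq_add_sum_compl 0, hS0]
  gcongr
  calc ∑ l ∈ {0}ᶜ, S l ≤ ∑ l ∈ {0}ᶜ, B := sum_le_sum fun l hl => hS l (by simpa using hl)
    _ ≤ ∑ _ : Fin (d + 1) → F, B :=
        sum_le_sum_of_subset_of_nonneg (subset_univ _) fun _ _ _ => by positivity
    _ = (Fintype.card F : ℝ) ^ (d + 1) * B := by simp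

end GoodPairs

theorem stmt_16_general (F : Type*) [Field F] [Fintype F] (k d : ℕ) :
    (Nat.card {t : ((Fin k → F) × (Fin k → F)) × ((Fin k → F) × (Fin k → F)) //
        Function.Injective t.1.1 ∧ (∀ i, t.1.2 i ≠ 0) ∧
        Function.Injective t.2.1 ∧ (∀ i, t.2.2 i ≠ 0) ∧
        (fun j : Fin (d + 1) => ∑ i, t.1.2 i * t.1.1 i ^ (j : ℕ)) =
          (fun j : Fin (d + 1) => ∑ i, t.2.2 i * t.2.1 i ^ (j : ℕ))} : ℝ) ≤
      (((∏ i ∈ Finset.range k, (Fintype.card F - i)) * (Fintype.card F - 1) ^ k : ℕ) : ℝ) ^ 2 /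
          (Fintype.card F : ℝ) ^ (d + 1) +
        ((Fintype.card F : ℝ) * ((d : ℝ) + 1)) ^ (2 * k) := by
  classical
  have hq : (0 : ℝ) < (Fintype.card F : ℝ) ^ (d + 1) := by positivity
  have key := card_filter_moments_eq_le (ι := Fin k) (F := F) d
  rw [Fintype.card_fin, card_goodPairs, Fintype.card_fin, Nat.descFactorial_eq_prod_range] at key
  calc _ = (#{t ∈ goodPairs (Fin k) F ×ˢ goodPairs (Fin k) F |
        moments d t.1 = moments d t.2} : ℝ) := by
        rw [Nat.card_eq_fintype_card, Fintype.card_subtype]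
        congr 2
        ext t
        simp only [mem_filter, mem_univ, true_and, mem_product, mem_goodPairs, and_assoc]
        rfl
    _ ≤ _ := by
        rw [div_add' _ _ _ hq.ne', le_div_iff₀ hq]
        linarith

/-- Let `q` be a prime power (`F` the finite field with `q` elements)
and `k ≥ 1, d` natural numbers.  Then the number of quadruples `(u,v,x,y)` with
`u, x` having pairwise distinct entries, `v, y` having all entries nonzero, and
`Z(u,v) = Z(x,y)`, is at most `N_g²/q^{d+1} + (q(d+1))^{2k}` as real numbers,
where `N_g := (∏_{i=0}^{k-1}(q-i)) · (q-1)^k`. -/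
theorem stmt_16 (F : Type*) [Field F] [Fintype F] (k d : ℕ) (hk : 1 ≤ k) :
    (Nat.card {t : ((Fin k → F) × (Fin k → F)) × ((Fin k → F) × (Fin k → F)) //
        Function.Injective t.1.1 ∧ (∀ i, t.1.2 i ≠ 0) ∧
        Function.Injective t.2.1 ∧ (∀ i, t.2.2 i ≠ 0) ∧
        (fun j : Fin (d + 1) => ∑ i, t.1.2 i * t.1.1 i ^ (j : ℕ)) =
          (fun j : Fin (d + 1) => ∑ i, t.2.2 i * t.2.1 i ^ (j : ℕ))} : ℝ) ≤
      (((∏ i ∈ Finset.range k, (Fintype.card F - i)) * (Fintype.card F - 1) ^ k : ℕ) : ℝ) ^ 2 /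
          (Fintype.card F : ℝ) ^ (d + 1) +
        ((Fintype.card F : ℝ) * ((d : ℝ) + 1)) ^ (2 * k) :=
  stmt_16_general F k d
end
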